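/- arXiv:1711.04635 — 8 statements merged into one kernel-verified Lean document; each statement's English description precedes it below -/
import Mathlib

section
/- For any finite family of vectors a₁,...,aₙ in ℝ² each of norm at most ε, there exists a choice of signs ε_i ∈ {1,-1} (with ε₁ = 1) such that ‖∑ ε_i a_i‖ ≤ 6ε. -/
/-
Among three vectors of a plane, two make an angle of at most 60° or at least 120°: otherwise every
squared cosine is below 1/4, and the 3 × 3 Gram determinant, which vanishes in dimension two, would
be positive. For such a pair `x, y` a suitable sign gives `‖x ± y‖ ≤ max ‖x‖ ‖y‖`, so the two
vectors can be merged into one without leaving the ball of radius ε. Merging until at most two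
vectors remain yields a signed sum of norm at most 2ε; flipping all signs makes the first one 1.
-/

open Finset Matrix Module
open scoped RealInnerProductSpace

lemma mul_eq_one_or_neg_one {a b : ℝ} (ha : a = 1 ∨ a = -1) (hb : b = 1 ∨ b = -1) :
    a * b = 1 ∨ a * b = -1 := by
  rcases ha with rfl | rfl <;> rcases hb with rfl | rfl <;> norm_num

variable {E : Type*} [NormedAddCommGroup E] [InnerProductSpace ℝ E]

lemma det_gram_fin_three_eq_zero [FiniteDimensional ℝ E] (hE : finrank ℝ E ≤ 2)
    (v : Fin 3 → E) : (gram ℝ v).det = 0 := by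
  by_contra h
  have := (linearIndependent_of_det_gram_ne_zero h).fintype_card_le_finrank
  simp only [Fintype.card_fin] at this
  omega

lemma exists_pair_norm_sq_mul_norm_sq_le_four_mul_inner_sq [FiniteDimensional ℝ E]
    (hE : finrank ℝ E ≤ 2) (u v w : E) :
    ‖u‖ ^ 2 * ‖v‖ ^ 2 ≤ 4 * ⟪u, v⟫ ^ 2 ∨ ‖u‖ ^ 2 * ‖w‖ ^ 2 ≤ 4 * ⟪u, w⟫ ^ 2 ∨
      ‖v‖ ^ 2 * ‖w‖ ^ 2 ≤ 4 * ⟪v, w⟫ ^ 2 := by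
  have hdet := det_gram_fin_three_eq_zero hE ![u, v, w]
  simp only [det_fin_three, gram_apply, Matrix.cons_val, real_inner_self_eq_norm_sq] at hdet
  rw [real_inner_comm u v, real_inner_comm u w, real_inner_comm v w] at hdet
  by_contra! h
  obtain ⟨huv, huw, hvw⟩ := h
  have hu : 0 < ‖u‖ ^ 2 := by nlinarith [sq_nonneg ⟪u, v⟫, sq_nonneg ‖v‖]
  have hv : 0 < ‖v‖ ^ 2 := by nlinarith [sq_nonneg ⟪u, v⟫, sq_nonneg ‖u‖]
  have hw : 0 < ‖w‖ ^ 2 := by nlinarith [sq_nonneg ⟪u, w⟫, sq_nonneg ‖u‖]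
  set N := ‖u‖ ^ 2 * ‖v‖ ^ 2 * ‖w‖ ^ 2
  have hprod : (⟪u, v⟫ * ⟪u, w⟫ * ⟪v, w⟫) ^ 2 < (N / 8) ^ 2 := by
    have := mul_lt_mul'' (mul_lt_mul'' huv huw (by positivity) (by positivity)) hvw
      (by positivity) (by positivity)
    linear_combination this / 64
  have := (abs_lt_of_sq_lt_sq' hprod (by positivity)).1
  nlinarith [mul_lt_mul_of_pos_right huv hw, mul_lt_mul_of_pos_right huw hv,
    mul_lt_mul_of_pos_right hvw hu]

lemma norm_sub_le_of_norm_mul_norm_le_two_mul_inner {ε : ℝ} {x y : E} (hx : ‖x‖ ≤ ε)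
    (hy : ‖y‖ ≤ ε) (h : ‖x‖ * ‖y‖ ≤ 2 * ⟪x, y⟫) : ‖x - y‖ ≤ ε := by
  have hsq : ‖x - y‖ ^ 2 ≤ ε ^ 2 := by
    rw [norm_sub_sq_real]
    rcases le_total ‖x‖ ‖y‖ with hxy | hxy <;>
      nlinarith [norm_nonneg x, norm_nonneg y]
  exact pow_le_pow_iff_left₀ (norm_nonneg _) ((norm_nonneg x).trans hx) two_ne_zero |>.1 hsq

lemma exists_sign_norm_add_smul_le {ε : ℝ} {x y : E} (hx : ‖x‖ ≤ ε) (hy : ‖y‖ ≤ ε)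
    (h : ‖x‖ ^ 2 * ‖y‖ ^ 2 ≤ 4 * ⟪x, y⟫ ^ 2) :
    ∃ σ : ℝ, (σ = 1 ∨ σ = -1) ∧ ‖x + σ • y‖ ≤ ε := by
  have habs : ‖x‖ * ‖y‖ ≤ 2 * |⟪x, y⟫| := by
    have := sq_le_sq.1 (show (‖x‖ * ‖y‖) ^ 2 ≤ (2 * ⟪x, y⟫) ^ 2 by linear_combination h)
    rwa [abs_of_nonneg (by positivity), abs_mul, abs_two] at this
  rcases le_total 0 ⟪x, y⟫ with hxy | hxy
  · refine ⟨-1, Or.inr rfl, ?_⟩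
    rw [neg_one_smul, ← sub_eq_add_neg]
    exact norm_sub_le_of_norm_mul_norm_le_two_mul_inner hx hy (by rwa [abs_of_nonneg hxy] at habs)
  · refine ⟨1, Or.inl rfl, ?_⟩
    rw [one_smul, ← sub_neg_eq_add]
    refine norm_sub_le_of_norm_mul_norm_le_two_mul_inner hx (by rwa [norm_neg]) ?_
    rwa [norm_neg, inner_neg_right, ← abs_of_nonpos hxy]

lemma exists_pair_norm_add_smul_le [FiniteDimensional ℝ E] (hE : finrank ℝ E ≤ 2) {ι : Type*}
    {ε : ℝ} {S : Finset ι} (hS : 2 < #S) {a : ι → E} (ha : ∀ i ∈ S, ‖a i‖ ≤ ε) :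
    ∃ p ∈ S, ∃ q ∈ S, p ≠ q ∧ ∃ σ : ℝ, (σ = 1 ∨ σ = -1) ∧ ‖a p + σ • a q‖ ≤ ε := by
  obtain ⟨i, hi, j, hj, k, hk, hij, hik, hjk⟩ := two_lt_card.1 hS
  rcases exists_pair_norm_sq_mul_norm_sq_le_four_mul_inner_sq hE (a i) (a j) (a k) with h | h | h
  · exact ⟨i, hi, j, hj, hij, exists_sign_norm_add_smul_le (ha i hi) (ha j hj) h⟩
  · exact ⟨i, hi, k, hk, hik, exists_sign_norm_add_smul_le (ha i hi) (ha k hk) h⟩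
  · exact ⟨j, hj, k, hk, hjk, exists_sign_norm_add_smul_le (ha j hj) (ha k hk) h⟩

lemma exists_signs_norm_sum_le [FiniteDimensional ℝ E] (hE : finrank ℝ E ≤ 2) {ι : Type*}
    [DecidableEq ι] {ε : ℝ} (hε : 0 ≤ ε) (S : Finset ι) (a : ι → E)
    (ha : ∀ i ∈ S, ‖a i‖ ≤ ε) :
    ∃ s : ι → ℝ, (∀ i, s i = 1 ∨ s i = -1) ∧ ‖∑ i ∈ S, s i • a i‖ ≤ 2 * ε := by
  induction S using Finset.strongInduction generalizing a with
  | H S ih =>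
  rcases le_or_gt #S 2 with hS | hS
  · refine ⟨1, fun _ => Or.inl rfl, ?_⟩
    simp only [Pi.one_apply, one_smul]
    calc ‖∑ i ∈ S, a i‖ ≤ ∑ i ∈ S, ‖a i‖ := norm_sum_le _ _
      _ ≤ #S • ε := sum_le_card_nsmul _ _ _ ha
      _ ≤ 2 * ε := by rw [nsmul_eq_mul]; gcongr; exact_mod_cast hS
  obtain ⟨p, hp, q, hq, hpq, σ, hσ, hpq_le⟩ := exists_pair_norm_add_smul_le hE hS ha
  obtain ⟨t, ht, ht_le⟩ := ih (S.erase q) (erase_ssubset hq)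
    (Function.update a p (a p + σ • a q)) (by
      intro i hi
      rcases eq_or_ne i p with rfl | hip
      · simpa using hpq_le
      · simpa [hip] using ha i (mem_of_mem_erase hi))
  refine ⟨Function.update t q (t p * σ), fun i => ?_, ?_⟩
  · rcases eq_or_ne i q with rfl | hiq
    · simpa using mul_eq_one_or_neg_one (ht p) hσ
    · simpa [hiq] using ht i
  · have hp' : p ∈ S.erase q := mem_erase.2 ⟨hpq, hp⟩
    have hsum : ∑ i ∈ S, Function.update t q (t p * σ) i • a i =
        ∑ i ∈ S.erase q, t i • Function.update a p (a p + σ • a q) i := by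
      rw [← add_sum_erase S _ hq, ← add_sum_erase _ _ hp', ← add_sum_erase _ _ hp',
        Function.update_self, Function.update_self, Function.update_of_ne hpq,
        sum_congr rfl fun x hx => ?_, smul_add, smul_smul]
      · abel
      · obtain ⟨hxp, hxq, -⟩ : x ≠ p ∧ x ≠ q ∧ x ∈ S := by simpa using hx
        rw [Function.update_of_ne hxq, Function.update_of_ne hxp]
    rw [hsum]
    exact ht_le

lemma exists_signs_apply_eq_one_norm_sum_le [FiniteDimensional ℝ E] (hE : finrank ℝ E ≤ 2)
    {ι : Type*} [Fintype ι] [DecidableEq ι] {ε : ℝ} (a : ι → E) (ha : ∀ i, ‖a i‖ ≤ ε) (i₀ : ι) :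
    ∃ s : ι → ℝ, (∀ i, s i = 1 ∨ s i = -1) ∧ s i₀ = 1 ∧ ‖∑ i, s i • a i‖ ≤ 2 * ε := by
  obtain ⟨s, hs, hs_le⟩ := exists_signs_norm_sum_le hE ((norm_nonneg _).trans (ha i₀)) univ a
    fun i _ => ha i
  have hs₀ : ‖s i₀‖ = 1 := by rcases hs i₀ with h | h <;> simp [h]
  refine ⟨fun i => s i₀ * s i, fun i => mul_eq_one_or_neg_one (hs i₀) (hs i), ?_, ?_⟩
  · rcases hs i₀ with h | h <;> simp [h]
  · simpa only [mul_smul, ← smul_sum, norm_smul, hs₀, one_mul] using hs_le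

theorem stmt3 (n : ℕ) (a : Fin n → EuclideanSpace ℝ (Fin 2)) (ε : ℝ)
    (hε : 0 < ε) (ha : ∀ i, ‖a i‖ ≤ ε) :
    ∃ s : Fin n → ℝ, (∀ i, s i = 1 ∨ s i = -1) ∧
      (∀ h : 0 < n, s ⟨0, h⟩ = 1) ∧
      ‖∑ i, s i • a i‖ ≤ 6 * ε := by
  cases n with
  | zero => exact ⟨1, fun _ => Or.inl rfl, fun h => absurd h (lt_irrefl 0), by simpa using hε.le⟩
  | succ m =>
    obtain ⟨s, hs, hs₀, hs_le⟩ :=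
      exists_signs_apply_eq_one_norm_sum_le finrank_euclideanSpace_fin.le a ha 0
    exact ⟨s, hs, fun _ => hs₀, by linarith⟩
end

section
/- For any finite family of vectors a₁,...,aₙ in ℝ² each of norm at most ε, there exists a choice of signs ε_i ∈ {1,-1} such that every partial sum satisfies ‖∑_{i<k} ε_i a_i‖ ≤ 7ε for all k ≤ n. -/
/-! Sort the signed terms into three slots, keeping every slot sum of norm at most `ε`.
Among any three vectors of `ℝ²` some two make an angle of at most `60°` up to sign (their Gram
determinant vanishes), so two slot sums can be merged, with a sign, into one of norm at most `ε`,
which frees a slot for the next term. A merge flips the signs of whole slots only, so every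
partial sum stays a signed combination of three slot sums and has norm at most `3ε`. -/

open Finset RealInnerProductSpace

def SignMergeable (ι E : Type*) [SeminormedAddCommGroup E] (ε : ℝ) : Prop :=
  ∀ G : ι → E, (∀ b, ‖G b‖ ≤ ε) → ∃ b₁ b₂, b₁ ≠ b₂ ∧ ∃ σ : ℤˣ, ‖G b₁ + σ • G b₂‖ ≤ ε

namespace Slotting

variable {ι E : Type*} [SeminormedAddCommGroup E] [DecidableEq ι]

-- `p i` is the slot of the `i`-th term together with its current sign.
def slotSum (c : ℕ → E) (p : ℕ → ι × ℤˣ) (k : ℕ) (b : ι) : E :=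
  ∑ i ∈ range k with (p i).1 = b, (p i).2 • c i

def merge (b₁ b₂ : ι) (σ : ℤˣ) (p : ℕ → ι × ℤˣ) (i : ℕ) : ι × ℤˣ :=
  if (p i).1 = b₂ then (b₁, σ * (p i).2) else p i

variable {c : ℕ → E} {p : ℕ → ι × ℤˣ} {b₁ b₂ : ι} {σ : ℤˣ}

theorem slotSum_merge_left (h : b₁ ≠ b₂) (k : ℕ) :
    slotSum c (merge b₁ b₂ σ p) k b₁ = slotSum c p k b₁ + σ • slotSum c p k b₂ := by
  simp only [slotSum, sum_filter, smul_sum, ← sum_add_distrib]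
  refine sum_congr rfl fun i _ => ?_
  unfold merge
  split_ifs <;> simp_all [mul_smul]

theorem slotSum_merge_right (h : b₁ ≠ b₂) (k : ℕ) : slotSum c (merge b₁ b₂ σ p) k b₂ = 0 := by
  simp only [slotSum, sum_filter]
  refine sum_eq_zero fun i _ => ?_
  unfold merge
  split_ifs <;> simp_all

theorem slotSum_merge_of_ne {b : ι} (h₁ : b ≠ b₁) (h₂ : b ≠ b₂) (k : ℕ) :
    slotSum c (merge b₁ b₂ σ p) k b = slotSum c p k b := by
  simp only [slotSum, sum_filter]
  refine sum_congr rfl fun i _ => ?_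
  unfold merge
  split_ifs <;> simp_all

theorem sign_merge (η : ι → ℤˣ) (i : ℕ) :
    η (merge b₁ b₂ σ p i).1 * (merge b₁ b₂ σ p i).2
      = Function.update η b₂ (η b₁ * σ) (p i).1 * (p i).2 := by
  unfold merge
  split_ifs with h
  · simp [h, mul_assoc]
  · simp [Function.update_of_ne h]

theorem slotSum_update_succ (q : ι × ℤˣ) (k : ℕ) (b : ι) :
    slotSum c (Function.update p k q) (k + 1) b
      = slotSum c p k b + if q.1 = b then q.2 • c k else 0 := by
  simp only [slotSum, sum_filter, sum_range_succ, Function.update_self]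
  congr 1
  refine sum_congr rfl fun i hi => ?_
  rw [Function.update_of_ne (mem_range.1 hi).ne]

variable [Fintype ι]

theorem sum_range_eq_sum_smul_slotSum (η : ι → ℤˣ) (k : ℕ) :
    ∑ i ∈ range k, (η (p i).1 * (p i).2) • c i = ∑ b, η b • slotSum c p k b := by
  simp only [slotSum, smul_sum]
  rw [← sum_fiberwise (range k) (fun i => (p i).1)]
  refine sum_congr rfl fun b _ => sum_congr rfl fun i hi => ?_
  rw [(mem_filter.1 hi).2, mul_smul]

theorem norm_sum_range_le_of_norm_slotSum_le {ε : ℝ} {k : ℕ} (h : ∀ b, ‖slotSum c p k b‖ ≤ ε)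
    (η : ι → ℤˣ) :
    ‖∑ i ∈ range k, (η (p i).1 * (p i).2) • c i‖ ≤ Fintype.card ι * ε := by
  rw [sum_range_eq_sum_smul_slotSum]
  refine (norm_sum_le _ _).trans ?_
  simpa [norm_units_zsmul] using sum_le_sum fun b (_ : b ∈ univ) => h b

-- Bounding the partial sums for all slot signs `η` is what survives later merges.
structure IsBalanced (ε : ℝ) (c : ℕ → E) (p : ℕ → ι × ℤˣ) (k : ℕ) : Prop where
  norm_slotSum_le : ∀ b, ‖slotSum c p k b‖ ≤ ε
  norm_sum_range_le :
    ∀ j ≤ k, ∀ η : ι → ℤˣ, ‖∑ i ∈ range j, (η (p i).1 * (p i).2) • c i‖ ≤ Fintype.card ι * ε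

theorem IsBalanced.exists_succ {ε : ℝ} {k : ℕ} (hmerge : SignMergeable ι E ε) (hc : ‖c k‖ ≤ ε)
    (h : IsBalanced ε c p k) : ∃ p' : ℕ → ι × ℤˣ, IsBalanced ε c p' (k + 1) := by
  obtain ⟨b₁, b₂, hne, σ, hσ⟩ := hmerge _ h.norm_slotSum_le
  have slot_le (b : ι) :
      ‖slotSum c (Function.update (merge b₁ b₂ σ p) k (b₂, 1)) (k + 1) b‖ ≤ ε := by
    rw [slotSum_update_succ]
    by_cases hb₂ : b = b₂
    · subst hb₂
      simpa [slotSum_merge_right hne] using hc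
    rw [if_neg (Ne.symm hb₂), add_zero]
    by_cases hb₁ : b = b₁
    · rwa [hb₁, slotSum_merge_left hne]
    · rw [slotSum_merge_of_ne hb₁ hb₂]
      exact h.norm_slotSum_le b
  refine ⟨_, slot_le, fun j hj η => ?_⟩
  rcases hj.lt_or_eq with hj | rfl
  · have hjk : j ≤ k := Nat.lt_succ_iff.1 hj
    convert h.norm_sum_range_le j hjk (Function.update η b₂ (η b₁ * σ)) using 3 with i hi
    rw [Function.update_of_ne ((mem_range.1 hi).trans_le hjk).ne, sign_merge]
  · exact norm_sum_range_le_of_norm_slotSum_le slot_le η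

theorem exists_isBalanced {ε : ℝ} (hmerge : SignMergeable ι E ε) (hc : ∀ i, ‖c i‖ ≤ ε) (n : ℕ) :
    ∃ p : ℕ → ι × ℤˣ, IsBalanced ε c p n := by
  induction n with
  | zero =>
    have hε : 0 ≤ ε := (norm_nonneg _).trans (hc 0)
    obtain ⟨b, -⟩ := hmerge 0 fun _ => by simpa using hε
    exact ⟨fun _ => (b, 1), ⟨fun _ => by simpa [slotSum] using hε, by simp [mul_nonneg, hε]⟩⟩
  | succ n ih =>
    obtain ⟨p, hp⟩ := ih
    exact hp.exists_succ hmerge (hc n)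

end Slotting

theorem SignMergeable.exists_units_norm_sum_range_le {ι E : Type*} [SeminormedAddCommGroup E]
    [Fintype ι] {ε : ℝ} (hmerge : SignMergeable ι E ε) {c : ℕ → E} (hc : ∀ i, ‖c i‖ ≤ ε)
    (n : ℕ) : ∃ s : ℕ → ℤˣ, ∀ k ≤ n, ‖∑ i ∈ range k, s i • c i‖ ≤ Fintype.card ι * ε := by
  classical
  obtain ⟨p, hp⟩ := Slotting.exists_isBalanced hmerge hc n
  exact ⟨fun i => (p i).2, fun k hk => by simpa using hp.norm_sum_range_le k hk 1⟩

theorem exists_units_norm_add_smul_le {F : Type*} [NormedAddCommGroup F] [InnerProductSpace ℝ F]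
    {ε : ℝ} {u v : F} (hu : ‖u‖ ≤ ε) (hv : ‖v‖ ≤ ε)
    (h : ‖u‖ * ‖v‖ ≤ 2 * |⟪u, v⟫|) : ∃ σ : ℤˣ, ‖u + σ • v‖ ≤ ε := by
  have hε : 0 ≤ ε := (norm_nonneg u).trans hu
  have key : ‖u‖ ^ 2 + ‖v‖ ^ 2 - ‖u‖ * ‖v‖ ≤ ε ^ 2 := by
    nlinarith [norm_nonneg u, norm_nonneg v, mul_nonneg (sub_nonneg.2 hu) (sub_nonneg.2 hv)]
  have of_sq {w : F} (hw : ‖w‖ ^ 2 ≤ ε ^ 2) : ‖w‖ ≤ ε :=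
    (pow_le_pow_iff_left₀ (norm_nonneg w) hε two_ne_zero).1 hw
  rcases le_or_gt 0 ⟪u, v⟫ with hx | hx
  · refine ⟨-1, of_sq ?_⟩
    rw [Units.neg_smul, one_smul, ← sub_eq_add_neg, norm_sub_sq_real]
    rw [abs_of_nonneg hx] at h
    linarith
  · refine ⟨1, of_sq ?_⟩
    rw [one_smul, norm_add_sq_real]
    rw [abs_of_neg hx] at h
    linarith

namespace EuclideanSpace

theorem gram_det_fin_two_eq_zero (u v w : EuclideanSpace ℝ (Fin 2)) :
    ‖u‖ ^ 2 * ‖v‖ ^ 2 * ‖w‖ ^ 2 + 2 * ⟪u, v⟫ * ⟪v, w⟫ * ⟪u, w⟫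
      - ‖w‖ ^ 2 * ⟪u, v⟫ ^ 2 - ‖v‖ ^ 2 * ⟪u, w⟫ ^ 2 - ‖u‖ ^ 2 * ⟪v, w⟫ ^ 2 = 0 := by
  simp only [← real_inner_self_eq_norm_sq, PiLp.inner_apply, RCLike.inner_apply, Fin.sum_univ_two,
    conj_trivial]
  ring

theorem exists_pair_norm_mul_norm_le_two_mul_abs_inner (u v w : EuclideanSpace ℝ (Fin 2)) :
    ‖u‖ * ‖v‖ ≤ 2 * |⟪u, v⟫| ∨ ‖u‖ * ‖w‖ ≤ 2 * |⟪u, w⟫| ∨ ‖v‖ * ‖w‖ ≤ 2 * |⟪v, w⟫| := by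
  by_contra! h
  obtain ⟨huv, huw, hvw⟩ := h
  have sq_lt {x y : EuclideanSpace ℝ (Fin 2)} (hxy : 2 * |⟪x, y⟫| < ‖x‖ * ‖y‖) :
      4 * ⟪x, y⟫ ^ 2 < ‖x‖ ^ 2 * ‖y‖ ^ 2 := by
    have := pow_lt_pow_left₀ hxy (by positivity) two_ne_zero
    rwa [mul_pow, mul_pow, sq_abs, show (2 : ℝ) ^ 2 = 4 by norm_num] at this
  have gram := gram_det_fin_two_eq_zero u v w
  set U := ‖u‖ ^ 2
  set V := ‖v‖ ^ 2
  set W := ‖w‖ ^ 2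
  set x := ⟪u, v⟫
  set y := ⟪u, w⟫
  set z := ⟪v, w⟫
  have hx : 4 * x ^ 2 < U * V := sq_lt huv
  have hy : 4 * y ^ 2 < U * W := sq_lt huw
  have hz : 4 * z ^ 2 < V * W := sq_lt hvw
  have hV : 0 ≤ V := by positivity
  have hW : 0 < W := by nlinarith [sq_nonneg z]
  have hP : 0 < U * V * W := by nlinarith [sq_nonneg x]
  have hxyz : (8 * x * y * z) ^ 2 < (U * V * W) ^ 2 := by
    have := mul_lt_mul'' (mul_lt_mul'' hx hy (by positivity) (by positivity)) hz
      (by positivity) (by positivity)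
    linear_combination this
  have := (abs_lt_of_sq_lt_sq' hxyz hP.le).1
  -- with all three squared cosines below `1/4`, the Gram determinant would be positive
  linarith [mul_lt_mul_of_pos_left hx hW, mul_lt_mul_of_pos_left hy (by nlinarith : 0 < V),
    mul_lt_mul_of_pos_left hz (by nlinarith : 0 < U)]

theorem signMergeable_fin_three (ε : ℝ) : SignMergeable (Fin 3) (EuclideanSpace ℝ (Fin 2)) ε := by
  intro G hG
  rcases exists_pair_norm_mul_norm_le_two_mul_abs_inner (G 0) (G 1) (G 2) with h | h | h
  · exact ⟨0, 1, by decide, exists_units_norm_add_smul_le (hG 0) (hG 1) h⟩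
  · exact ⟨0, 2, by decide, exists_units_norm_add_smul_le (hG 0) (hG 2) h⟩
  · exact ⟨1, 2, by decide, exists_units_norm_add_smul_le (hG 1) (hG 2) h⟩

end EuclideanSpace

theorem Fin.sum_filter_val_lt {M : Type*} [AddCommMonoid M] {n k : ℕ} (hk : k ≤ n) (f : ℕ → M) :
    ∑ i ∈ univ.filter (fun i : Fin n => (i : ℕ) < k), f i = ∑ i ∈ range k, f i := by
  rw [sum_filter, Fin.sum_univ_eq_sum_range (fun i => if i < k then f i else 0), ← sum_filter]
  congr 1
  ext i
  simp only [mem_filter, mem_range]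
  omega

theorem stmt4 (n : ℕ) (a : Fin n → EuclideanSpace ℝ (Fin 2)) (ε : ℝ)
    (hε : 0 < ε) (ha : ∀ i, ‖a i‖ ≤ ε) :
    ∃ s : Fin n → ℝ, (∀ i, s i = 1 ∨ s i = -1) ∧
      ∀ k ≤ n,
        ‖∑ i ∈ Finset.univ.filter (fun i : Fin n => (i : ℕ) < k), s i • a i‖ ≤ 7 * ε := by
  let c (i : ℕ) : EuclideanSpace ℝ (Fin 2) := if h : i < n then a ⟨i, h⟩ else 0
  have hc (i : ℕ) : ‖c i‖ ≤ ε := by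
    unfold c
    split_ifs
    exacts [ha _, by simpa using hε.le]
  obtain ⟨t, ht⟩ :=
    (EuclideanSpace.signMergeable_fin_three ε).exists_units_norm_sum_range_le hc n
  refine ⟨fun i => ((t i : ℤ) : ℝ), fun i => ?_, fun k hk => ?_⟩
  · rcases Int.units_eq_one_or (t i) with h | h <;> simp [h]
  · have hca (i : Fin n) : ((t i : ℤ) : ℝ) • a i = t i • c i := by
      simp [c, Units.smul_def, Int.cast_smul_eq_zsmul]
    simp only [hca, Fin.sum_filter_val_lt hk (fun i => t i • c i)]
    have := ht k hk
    rw [Fintype.card_fin, Nat.cast_ofNat] at this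
    linarith
end

section
/- If a finite set S of vectors in ℝ² has more than 6 elements, all with norms less than ε, then one can replace S by a strictly smaller multiset C of vectors, each of norm less than ε, such that every element of C is either an element of S or a difference u - v of two elements of S, and every signed sum achievable from C is achievable from S by a choice of signs. -/
/-- `x` is a signed sum achievable from the multiset `M`: there is an ordering of `M`
and signs `±1` whose signed sum equals `x`. -/
def AchievableSum (M : Multiset (EuclideanSpace ℝ (Fin 2)))
    (x : EuclideanSpace ℝ (Fin 2)) : Prop :=
  ∃ l : List (EuclideanSpace ℝ (Fin 2)), (l : Multiset (EuclideanSpace ℝ (Fin 2))) = M ∧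
    ∃ s : List ℝ, s.length = l.length ∧ (∀ c ∈ s, c = 1 ∨ c = -1) ∧
      (List.zipWith (fun (c : ℝ) (v : EuclideanSpace ℝ (Fin 2)) => c • v) s l).sum = x

/-!
Split the plane into six half-open sectors of angle `π / 3` around the origin. Among
more than six vectors two, `u` and `v`, lie in the same sector, so `⟪u, v⟫ ≥ ‖u‖ ‖v‖ / 2` and
hence `‖u - v‖ ≤ max ‖u‖ ‖v‖ < ε`. Replace the pair by `u - v`: a sign `±1` on `u - v` is the
pair of signs `±1, ∓1` on `u, v`, so no new signed sums appear.
-/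

open Real ComplexConjugate
open scoped InnerProductSpace

theorem norm_sub_le_max_of_norm_mul_norm_le_two_inner {F : Type*} [NormedAddCommGroup F]
    [InnerProductSpace ℝ F] {u v : F} (h : ‖u‖ * ‖v‖ ≤ 2 * ⟪u, v⟫_ℝ) :
    ‖u - v‖ ≤ max ‖u‖ ‖v‖ := by
  have hsq : ‖u - v‖ ^ 2 ≤ ‖u‖ ^ 2 + ‖v‖ ^ 2 - ‖u‖ * ‖v‖ := by
    rw [norm_sub_sq_real]; linarith
  refine le_of_pow_le_pow_left₀ two_ne_zero (by positivity) (hsq.trans ?_)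
  rcases le_total ‖u‖ ‖v‖ with huv | hvu
  · rw [max_eq_right huv]; nlinarith [norm_nonneg u]
  · rw [max_eq_left hvu]; nlinarith [norm_nonneg v]

namespace Complex

/-- The ceiling (rather than the floor) puts `arg z = π` in the same sector as the arguments just
below it, so the sectors `((k - 1) π / 3, k π / 3]`, `k = -2, …, 3`, cover `(-π, π]` with no
wrap-around. -/
noncomputable def sextant (z : ℂ) : ℤ := ⌈z.arg * 3 / π⌉

theorem sextant_mem_Icc (z : ℂ) : z.sextant ∈ Finset.Icc (-2 : ℤ) 3 := by
  have h1 : -3 < z.arg * 3 / π := by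
    rw [lt_div_iff₀ pi_pos]; linarith [neg_pi_lt_arg z]
  have h2 : z.arg * 3 / π ≤ 3 := by
    rw [div_le_iff₀ pi_pos]; linarith [arg_le_pi z]
  rw [Finset.mem_Icc, sextant]
  constructor
  · exact Int.add_one_le_iff.2 (Int.lt_ceil.2 (by exact_mod_cast h1))
  · exact Int.ceil_le.2 (by exact_mod_cast h2)

theorem abs_arg_sub_lt_of_sextant_eq {a b : ℂ} (h : a.sextant = b.sextant) :
    |a.arg - b.arg| < π / 3 := by
  have key : |a.arg * 3 / π - b.arg * 3 / π| < 1 := by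
    have ha := Int.ceil_lt_add_one (a.arg * 3 / π)
    have hb := Int.ceil_lt_add_one (b.arg * 3 / π)
    have ha' := Int.le_ceil (a.arg * 3 / π)
    have hb' := Int.le_ceil (b.arg * 3 / π)
    unfold sextant at h
    rw [h] at ha ha'
    rw [abs_lt]; constructor <;> linarith
  rw [← sub_div, ← sub_mul, abs_div, abs_mul, abs_of_pos pi_pos, div_lt_one pi_pos] at key
  rw [lt_div_iff₀ three_pos]
  simpa using key

theorem re_mul_conj_eq_norm_mul_norm_mul_cos (a b : ℂ) :
    (b * conj a).re = ‖a‖ * ‖b‖ * Real.cos (a.arg - b.arg) := by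
  rw [Real.cos_sub, mul_re, conj_re, conj_im, ← norm_mul_cos_arg a, ← norm_mul_sin_arg a,
    ← norm_mul_cos_arg b, ← norm_mul_sin_arg b]
  ring

theorem norm_mul_norm_le_two_inner_of_sextant_eq {a b : ℂ} (h : a.sextant = b.sextant) :
    ‖a‖ * ‖b‖ ≤ 2 * ⟪a, b⟫_ℝ := by
  have hd := abs_arg_sub_lt_of_sextant_eq h
  have hcos : Real.cos (π / 3) ≤ Real.cos |a.arg - b.arg| :=
    Real.cos_le_cos_of_nonneg_of_le_pi (abs_nonneg _) (by linarith [pi_pos]) hd.le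
  rw [Real.cos_abs, Real.cos_pi_div_three] at hcos
  rw [Complex.inner, re_mul_conj_eq_norm_mul_norm_mul_cos]
  nlinarith [mul_nonneg (norm_nonneg a) (norm_nonneg b)]

end Complex

theorem norm_sub_le_max_of_sextant_eq {F : Type*} [NormedAddCommGroup F] [InnerProductSpace ℝ F]
    (e : F →ₗᵢ[ℝ] ℂ) {u v : F} (h : (e u).sextant = (e v).sextant) :
    ‖u - v‖ ≤ max ‖u‖ ‖v‖ := by
  apply norm_sub_le_max_of_norm_mul_norm_le_two_inner
  rw [← e.norm_map u, ← e.norm_map v, ← e.inner_map_map]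
  exact Complex.norm_mul_norm_le_two_inner_of_sextant_eq h

theorem Multiset.exists_eq_cons_cons_of_card_lt {α β : Type*} {s : Multiset α} {t : Finset β}
    {f : α → β} (hf : ∀ a ∈ s, f a ∈ t) (hcard : t.card < card s) :
    ∃ a b r, s = a ::ₘ b ::ₘ r ∧ f a = f b := by
  classical
  have hnd : ¬ (s.map f).Nodup := fun hnd => by
    have hsub : (⟨s.map f, hnd⟩ : Finset β) ⊆ t := fun y hy => by
      obtain ⟨a, ha, rfl⟩ := mem_map.1 hy
      exact hf a ha
    have := Finset.card_le_card hsub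
    simp only [Finset.card_mk, card_map] at this
    omega
  simp only [nodup_iff_ne_cons_cons, not_forall, not_not] at hnd
  obtain ⟨c, r, hr⟩ := hnd
  obtain ⟨a, ha, rfl, hr'⟩ := (map_eq_cons _ _ _ _).2 hr
  obtain ⟨b, hb, hba, -⟩ := (map_eq_cons _ _ _ _).2 hr'
  exact ⟨a, b, (s.erase a).erase b, by rw [cons_erase hb, cons_erase ha], hba.symm⟩

namespace AchievableSum

theorem zero : AchievableSum 0 0 := ⟨[], rfl, [], rfl, by simp, rfl⟩

theorem cons {M : Multiset (EuclideanSpace ℝ (Fin 2))} {x : EuclideanSpace ℝ (Fin 2)}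
    (h : AchievableSum M x) (a : EuclideanSpace ℝ (Fin 2)) {c : ℝ} (hc : c = 1 ∨ c = -1) :
    AchievableSum (a ::ₘ M) (c • a + x) := by
  obtain ⟨l, rfl, s, hlen, hs, rfl⟩ := h
  refine ⟨a :: l, rfl, c :: s, by simp [hlen], ?_, rfl⟩
  rintro d (_ | ⟨_, hd⟩)
  exacts [hc, hs d hd]

theorem neg_sum (N : Multiset (EuclideanSpace ℝ (Fin 2))) : AchievableSum N (-N.sum) := by
  induction N using Multiset.induction_on with
  | empty => simpa using zero
  | cons a N ih => simpa [neg_add, add_comm] using ih.cons a (Or.inr rfl)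

theorem sum_sub_sum (P N : Multiset (EuclideanSpace ℝ (Fin 2))) :
    AchievableSum (P + N) (P.sum - N.sum) := by
  induction P using Multiset.induction_on with
  | empty => simpa using neg_sum N
  | cons a P ih => simpa [Multiset.cons_add, add_sub_assoc] using ih.cons a (Or.inl rfl)

theorem exists_add_eq_sum_sub_sum {M : Multiset (EuclideanSpace ℝ (Fin 2))}
    {x : EuclideanSpace ℝ (Fin 2)} (h : AchievableSum M x) :
    ∃ P N, P + N = M ∧ x = P.sum - N.sum := by
  obtain ⟨l, rfl, s, hlen, hs, rfl⟩ := h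
  induction l generalizing s with
  | nil => exact ⟨0, 0, by simp, by simp [List.length_eq_zero_iff.mp hlen]⟩
  | cons a l ih =>
    obtain _ | ⟨c, s⟩ := s
    · simp at hlen
    obtain ⟨P, N, hPN, hx⟩ :=
      ih s (by simpa using hlen) fun d hd => hs d (List.mem_cons_of_mem _ hd)
    rcases hs c List.mem_cons_self with rfl | rfl
    · exact ⟨a ::ₘ P, N, by simp [Multiset.cons_add, hPN], by simp [hx, add_sub_assoc]⟩
    · refine ⟨P, a ::ₘ N, by simp [Multiset.add_cons, hPN], ?_⟩
      simp [hx]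
      abel

theorem of_cons_sub {R : Multiset (EuclideanSpace ℝ (Fin 2))} {u v x : EuclideanSpace ℝ (Fin 2)}
    (h : AchievableSum ((u - v) ::ₘ R) x) : AchievableSum (u ::ₘ v ::ₘ R) x := by
  obtain ⟨P, N, hPN, rfl⟩ := exists_add_eq_sum_sub_sum h
  rcases Multiset.mem_add.1 (hPN ▸ Multiset.mem_cons_self _ _ : u - v ∈ P + N) with hP | hN
  · obtain ⟨P, rfl⟩ := Multiset.exists_cons_of_mem hP
    rw [Multiset.cons_add, Multiset.cons_inj_right] at hPN
    have := sum_sub_sum (u ::ₘ P) (v ::ₘ N)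
    rw [Multiset.cons_add, Multiset.add_cons, hPN] at this
    convert this using 1
    simp only [Multiset.sum_cons]
    abel
  · obtain ⟨N, rfl⟩ := Multiset.exists_cons_of_mem hN
    rw [Multiset.add_cons, Multiset.cons_inj_right] at hPN
    have := sum_sub_sum (v ::ₘ P) (u ::ₘ N)
    rw [Multiset.cons_add, Multiset.add_cons, hPN, Multiset.cons_swap] at this
    convert this using 1
    simp only [Multiset.sum_cons]
    abel

end AchievableSum

theorem stmt5 (S : Multiset (EuclideanSpace ℝ (Fin 2))) (ε : ℝ)
    (hcard : 6 < Multiset.card S) (hS : ∀ x ∈ S, ‖x‖ < ε) :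
    ∃ C : Multiset (EuclideanSpace ℝ (Fin 2)),
      Multiset.card C < Multiset.card S ∧
      (∀ c ∈ C, ‖c‖ < ε) ∧
      (∀ c ∈ C, c ∈ S ∨ ∃ u ∈ S, ∃ v ∈ S, c = u - v) ∧
      ∀ x, AchievableSum C x → AchievableSum S x := by
  let e := Complex.orthonormalBasisOneI.repr.symm.toLinearIsometry
  obtain ⟨u, v, R, rfl, huv⟩ := Multiset.exists_eq_cons_cons_of_card_lt
    (f := fun w => (e w).sextant) (fun w _ => Complex.sextant_mem_Icc _) (by simpa using hcard)
  have hu := hS u (by simp)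
  have hv := hS v (by simp)
  refine ⟨(u - v) ::ₘ R, by simp, ?_, ?_, fun x hx => hx.of_cons_sub⟩
  · intro c hc
    rcases Multiset.mem_cons.1 hc with rfl | hc
    · exact (norm_sub_le_max_of_sextant_eq e huv).trans_lt (max_lt hu hv)
    · exact hS c (by simp [hc])
  · intro c hc
    rcases Multiset.mem_cons.1 hc with rfl | hc
    · exact Or.inr ⟨u, by simp, v, by simp, rfl⟩
    · exact Or.inl (by simp [hc])
end

section
/- Let (aᵢ) be a sequence of vectors in ℝ² with ‖aᵢ‖ → 0. Then there exists a choice of signs εᵢ ∈ {1,-1} such that the series ∑ εᵢ aᵢ converges in ℝ². -/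
/-!
Split the sequence into consecutive blocks `[n k, n (k + 1))` on which `‖a i‖ ≤ 2⁻ᵏ`. Inside a
block, signs can be chosen so that every partial sum has norm at most `2 · 2⁻ᵏ`: maintain two
signed "piles" of norm at most `δ`. Among the two piles and the next vector, two span lines at an
angle of at most `π / 3` (three lines in the plane cannot pairwise meet at larger angles), and such
a pair combines, with a suitable sign, into a vector of norm at most `δ`. As `∑ 2⁻ᵏ < ∞`, the block
sums are summable and the partial sums inside the `k`-th block tend to zero, so the glued series
converges.
-/

open Filter Finset Function
open scoped RealInnerProductSpace Topology

section NearlyParallel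

variable {E : Type*} [SeminormedAddCommGroup E] [InnerProductSpace ℝ E]

/-- The lines `ℝ x` and `ℝ y` meet at an angle of at most `π / 3` (or `x` or `y` is zero). -/
def NearlyParallel (x y : E) : Prop :=
  ‖x‖ * ‖y‖ ≤ 2 * |⟪x, y⟫|

theorem NearlyParallel.exists_sq_eq_one_norm_add_smul_le {x y : E} {δ : ℝ}
    (hxy : NearlyParallel x y) (hx : ‖x‖ ≤ δ) (hy : ‖y‖ ≤ δ) :
    ∃ s : ℝ, s ^ 2 = 1 ∧ ‖x + s • y‖ ≤ δ := by
  obtain ⟨s, hs, hs_inner⟩ : ∃ s : ℝ, s ^ 2 = 1 ∧ s * ⟪x, y⟫ = -|⟪x, y⟫| := by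
    rcases le_or_gt 0 ⟪x, y⟫ with h | h
    · exact ⟨-1, by norm_num, by rw [abs_of_nonneg h]; ring⟩
    · exact ⟨1, by norm_num, by rw [abs_of_neg h]; ring⟩
  refine ⟨s, hs, ?_⟩
  have hδ : 0 ≤ δ := (norm_nonneg x).trans hx
  have hnorm : ‖x + s • y‖ ^ 2 = ‖x‖ ^ 2 + ‖y‖ ^ 2 - 2 * |⟪x, y⟫| := by
    rw [norm_add_sq_real, real_inner_smul_right, norm_smul, mul_pow, Real.norm_eq_abs, sq_abs,
      hs, hs_inner]
    ring
  -- `‖x‖² + ‖y‖² - ‖x‖ ‖y‖ ≤ (max ‖x‖ ‖y‖)²`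
  have hsq : ‖x + s • y‖ ^ 2 ≤ δ ^ 2 := by
    unfold NearlyParallel at hxy
    nlinarith [mul_nonneg (sub_nonneg.2 hx) (sub_nonneg.2 hy),
      mul_nonneg (norm_nonneg x) (sub_nonneg.2 hx), mul_nonneg (norm_nonneg y) (sub_nonneg.2 hy)]
  exact (pow_le_pow_iff_left₀ (norm_nonneg _) hδ two_ne_zero).1 hsq

end NearlyParallel

theorem gram_det_eq_zero_fin_two (x y z : EuclideanSpace ℝ (Fin 2)) :
    ‖x‖ ^ 2 * ‖y‖ ^ 2 * ‖z‖ ^ 2 + 2 * (⟪x, y⟫ * ⟪x, z⟫ * ⟪y, z⟫) =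
      ⟪x, y⟫ ^ 2 * ‖z‖ ^ 2 + ⟪x, z⟫ ^ 2 * ‖y‖ ^ 2 + ⟪y, z⟫ ^ 2 * ‖x‖ ^ 2 := by
  simp only [← real_inner_self_eq_norm_sq, PiLp.inner_apply, Fin.sum_univ_two, RCLike.inner_apply,
    conj_trivial]
  ring

theorem nearlyParallel_or_of_fin_two (x y z : EuclideanSpace ℝ (Fin 2)) :
    NearlyParallel x y ∨ NearlyParallel x z ∨ NearlyParallel y z := by
  -- if every `|cos|` were below `1 / 2`, the Gram determinant would be positive
  simp only [NearlyParallel]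
  by_contra! h
  obtain ⟨hxy, hxz, hyz⟩ := h
  have hgram := gram_det_eq_zero_fin_two x y z
  set A := ‖x‖
  set B := ‖y‖
  set C := ‖z‖
  set p := ⟪x, y⟫
  set q := ⟪x, z⟫
  set r := ⟪y, z⟫
  have four_mul_sq_le {u w : ℝ} (huw : 2 * |u| < w) : 4 * u ^ 2 ≤ w ^ 2 := by
    nlinarith [sq_abs u, abs_nonneg u]
  have hp := mul_le_mul_of_nonneg_right (four_mul_sq_le hxy) (sq_nonneg C)
  have hq := mul_le_mul_of_nonneg_right (four_mul_sq_le hxz) (sq_nonneg B)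
  have hr := mul_le_mul_of_nonneg_right (four_mul_sq_le hyz) (sq_nonneg A)
  have hpqr : 2 * |p| * (2 * |q|) * (2 * |r|) < A * B * (A * C) * (B * C) :=
    mul_lt_mul'' (mul_lt_mul'' hxy hxz (by positivity) (by positivity)) hyz (by positivity)
      (by positivity)
  have habs : -(p * q * r) ≤ |p| * |q| * |r| := by
    rw [← abs_mul, ← abs_mul]
    exact neg_le_abs _
  linarith

section Piles

variable {E : Type*} [SeminormedAddCommGroup E] [NormedSpace ℝ E] {v : ℕ → E} {δ : ℝ} {m : ℕ}
  {α β : ℕ → ℝ}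

/-- A splitting of `v 0, …, v (m - 1)` into two piles with signed sums `∑ α i • v i` and
`∑ β i • v i`: each `v i` lies in exactly one pile, with sign `α i + β i = ±1`. -/
structure PileSplit (v : ℕ → E) (δ : ℝ) (m : ℕ) (α β : ℕ → ℝ) : Prop where
  mul_eq_zero : ∀ i, α i * β i = 0
  add_sq_eq_one : ∀ i, (α i + β i) ^ 2 = 1
  norm_left_le : ‖∑ i ∈ range m, α i • v i‖ ≤ δ
  norm_right_le : ‖∑ i ∈ range m, β i • v i‖ ≤ δ
  norm_add_norm_le : ∀ m' ≤ m,
    ‖∑ i ∈ range m', α i • v i‖ + ‖∑ i ∈ range m', β i • v i‖ ≤ 2 * δ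

theorem PileSplit.zero (hδ : 0 ≤ δ) : PileSplit v δ 0 1 0 where
  mul_eq_zero := by simp
  add_sq_eq_one := by simp
  norm_left_le := by simpa
  norm_right_le := by simpa
  norm_add_norm_le m' hm' := by
    obtain rfl := Nat.le_zero.1 hm'
    simpa

theorem PileSplit.symm (h : PileSplit v δ m α β) : PileSplit v δ m β α where
  mul_eq_zero i := by rw [mul_comm]; exact h.mul_eq_zero i
  add_sq_eq_one i := by rw [add_comm]; exact h.add_sq_eq_one i
  norm_left_le := h.norm_right_le
  norm_right_le := h.norm_left_le
  norm_add_norm_le m' hm' := by rw [add_comm]; exact h.norm_add_norm_le m' hm'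

theorem sum_range_update_smul_of_le {m' : ℕ} (hm' : m' ≤ m) (s : ℝ) :
    ∑ i ∈ range m', update α m s i • v i = ∑ i ∈ range m', α i • v i :=
  sum_congr rfl fun i hi => by rw [update_of_ne (by grind)]

theorem PileSplit.push {s : ℝ} (h : PileSplit v δ m α β) (hs : s ^ 2 = 1)
    (hm : ‖∑ i ∈ range m, α i • v i + s • v m‖ ≤ δ) :
    PileSplit v δ (m + 1) (update α m s) (update β m 0) where
  mul_eq_zero i := by
    rcases eq_or_ne i m with rfl | hi
    · simp
    · simpa [update_of_ne hi] using h.mul_eq_zero i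
  add_sq_eq_one i := by
    rcases eq_or_ne i m with rfl | hi
    · simpa using hs
    · simpa [update_of_ne hi] using h.add_sq_eq_one i
  norm_left_le := by
    rwa [sum_range_succ, sum_range_update_smul_of_le le_rfl, update_self]
  norm_right_le := by
    simpa [sum_range_succ, sum_range_update_smul_of_le le_rfl] using h.norm_right_le
  norm_add_norm_le m' hm' := by
    rcases Nat.le_succ_iff.1 hm' with hm' | rfl
    · rw [sum_range_update_smul_of_le hm', sum_range_update_smul_of_le hm']
      exact h.norm_add_norm_le m' hm'
    · simp only [sum_range_succ, sum_range_update_smul_of_le le_rfl, update_self, zero_smul,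
        add_zero]
      linarith [h.norm_right_le]

theorem PileSplit.merge {s : ℝ} (h : PileSplit v δ m α β) (hs : s ^ 2 = 1)
    (hm : ‖∑ i ∈ range m, α i • v i + s • ∑ i ∈ range m, β i • v i‖ ≤ δ) :
    PileSplit v δ m (α + s • β) 0 := by
  have hsum (m' : ℕ) : ∑ i ∈ range m', (α + s • β) i • v i =
      ∑ i ∈ range m', α i • v i + s • ∑ i ∈ range m', β i • v i := by
    simp only [Pi.add_apply, Pi.smul_apply, smul_eq_mul, add_smul, mul_smul, sum_add_distrib,
      smul_sum]
  have hs_norm : ‖s‖ = 1 := by rcases sq_eq_one_iff.1 hs with rfl | rfl <;> simp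
  refine ⟨fun i => mul_zero _, fun i => ?_, by rwa [hsum], ?_, fun m' hm' => ?_⟩
  · simp only [Pi.add_apply, Pi.smul_apply, smul_eq_mul, Pi.zero_apply, add_zero]
    linear_combination h.add_sq_eq_one i + 2 * (s - 1) * h.mul_eq_zero i + β i ^ 2 * hs
  · simpa using (norm_nonneg _).trans h.norm_left_le
  · simp only [hsum, Pi.zero_apply, zero_smul, sum_const_zero, norm_zero, add_zero]
    calc _ ≤ ‖∑ i ∈ range m', α i • v i‖ + ‖s • ∑ i ∈ range m', β i • v i‖ := norm_add_le _ _
      _ ≤ 2 * δ := by rw [norm_smul, hs_norm, one_mul]; exact h.norm_add_norm_le m' hm'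

theorem PileSplit.norm_sum_range_le (h : PileSplit v δ m α β) {m' : ℕ} (hm' : m' ≤ m) :
    ‖∑ i ∈ range m', (α i + β i) • v i‖ ≤ 2 * δ := by
  simp only [add_smul, sum_add_distrib]
  exact (norm_add_le _ _).trans (h.norm_add_norm_le m' hm')

end Piles

theorem PileSplit.exists_succ {v : ℕ → EuclideanSpace ℝ (Fin 2)} {δ : ℝ} {m : ℕ} {α β : ℕ → ℝ}
    (h : PileSplit v δ m α β) (hv : ‖v m‖ ≤ δ) : ∃ α' β', PileSplit v δ (m + 1) α' β' := by
  rcases nearlyParallel_or_of_fin_two (∑ i ∈ range m, α i • v i) (∑ i ∈ range m, β i • v i) (v m)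
    with hαβ | hαv | hβv
  · obtain ⟨s, hs, hle⟩ := hαβ.exists_sq_eq_one_norm_add_smul_le h.norm_left_le h.norm_right_le
    exact ⟨_, _, (h.merge hs hle).symm.push (one_pow 2) (by simpa using hv)⟩
  · obtain ⟨s, hs, hle⟩ := hαv.exists_sq_eq_one_norm_add_smul_le h.norm_left_le hv
    exact ⟨_, _, h.push hs hle⟩
  · obtain ⟨s, hs, hle⟩ := hβv.exists_sq_eq_one_norm_add_smul_le h.norm_right_le hv
    exact ⟨_, _, h.symm.push hs hle⟩

theorem exists_pileSplit {v : ℕ → EuclideanSpace ℝ (Fin 2)} {δ : ℝ} (hδ : 0 ≤ δ) {m : ℕ}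
    (hv : ∀ i < m, ‖v i‖ ≤ δ) : ∃ α β, PileSplit v δ m α β := by
  induction m with
  | zero => exact ⟨_, _, .zero hδ⟩
  | succ m ih =>
    obtain ⟨α, β, h⟩ := ih fun i hi => hv i (by omega)
    exact h.exists_succ (hv m m.lt_succ_self)

theorem exists_signs_norm_sum_Ico_le (v : ℕ → EuclideanSpace ℝ (Fin 2)) {δ : ℝ} {m M : ℕ}
    (hδ : 0 ≤ δ) (hv : ∀ i ∈ Ico m M, ‖v i‖ ≤ δ) :
    ∃ ε : ℕ → ℝ, (∀ i, ε i = 1 ∨ ε i = -1) ∧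
      ∀ N, m ≤ N → N ≤ M → ‖∑ i ∈ Ico m N, ε i • v i‖ ≤ 2 * δ := by
  obtain ⟨α, β, h⟩ := exists_pileSplit (v := fun j => v (m + j)) (m := M - m) hδ
    fun j hj => hv _ (mem_Ico.2 ⟨by omega, by omega⟩)
  refine ⟨fun i => α (i - m) + β (i - m), fun i => sq_eq_one_iff.1 (h.add_sq_eq_one _),
    fun N hmN hNM => ?_⟩
  rw [sum_Ico_eq_sum_range]
  simpa using h.norm_sum_range_le (m' := N - m) (by omega)

section Blocks

/-- For strictly monotone `n` and `n 0 ≤ N`, the index `k` of the block `[n k, n (k + 1))`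
containing `N`. -/
def blockIndex (n : ℕ → ℕ) (N : ℕ) : ℕ :=
  Nat.findGreatest (fun k => n k ≤ N) N

variable {n : ℕ → ℕ} {k N : ℕ}

theorem apply_blockIndex_le (hN : n 0 ≤ N) : n (blockIndex n N) ≤ N :=
  Nat.findGreatest_spec (P := fun k => n k ≤ N) (Nat.zero_le N) hN

theorem le_blockIndex (hn : StrictMono n) (h : n k ≤ N) : k ≤ blockIndex n N :=
  Nat.le_findGreatest ((hn.id_le k).trans h) h

theorem lt_apply_blockIndex_succ (hn : StrictMono n) : N < n (blockIndex n N + 1) := by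
  by_contra! h
  exact Nat.findGreatest_is_greatest (Nat.lt_succ_self _) ((hn.id_le _).trans h) h

theorem blockIndex_eq (hn : StrictMono n) (h₁ : n k ≤ N) (h₂ : N < n (k + 1)) :
    blockIndex n N = k := by
  have hK := apply_blockIndex_le ((hn.monotone k.zero_le).trans h₁)
  exact le_antisymm (Nat.lt_succ_iff.1 (hn.lt_iff_lt.1 (hK.trans_lt h₂))) (le_blockIndex hn h₁)

theorem tendsto_blockIndex (hn : StrictMono n) : Tendsto (blockIndex n) atTop atTop :=
  tendsto_atTop_atTop.2 fun k => ⟨n k, fun _ h => le_blockIndex hn h⟩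

theorem exists_tendsto_sum_range_blockIndex {E : Type*} [SeminormedAddCommGroup E]
    [CompleteSpace E]
    (hn : StrictMono n) {b : ℕ → ℝ} (hb : Summable b) (f : ℕ → ℕ → E)
    (hf : ∀ k N, n k ≤ N → N ≤ n (k + 1) → ‖∑ i ∈ Ico (n k) N, f k i‖ ≤ b k) :
    ∃ l, Tendsto (fun N => ∑ i ∈ range N, f (blockIndex n i) i) atTop (𝓝 l) := by
  set g := fun i => f (blockIndex n i) i
  have hg : ∀ k N, N ≤ n (k + 1) → ∑ i ∈ Ico (n k) N, g i = ∑ i ∈ Ico (n k) N, f k i :=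
    fun k N hN => sum_congr rfl fun i hi => by
      rw [mem_Ico] at hi
      simp only [g, blockIndex_eq hn hi.1 (hi.2.trans_le hN)]
  set c := fun k => ∑ i ∈ Ico (n k) (n (k + 1)), f k i
  have hc : Summable c := hb.of_norm_bounded fun k => hf k _ (hn.monotone k.le_succ) le_rfl
  have hsum_blocks (m : ℕ) :
      ∑ i ∈ range (n m), g i = ∑ i ∈ range (n 0), g i + ∑ k ∈ range m, c k := by
    induction m with
    | zero => simp
    | succ m ih =>
      rw [← sum_range_add_sum_Ico _ (hn.monotone m.le_succ), ih, sum_range_succ, add_assoc,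
        hg m _ le_rfl]
  have hsplit : ∀ᶠ N in atTop, ∑ i ∈ range (n 0), g i + ∑ k ∈ range (blockIndex n N), c k +
      ∑ i ∈ Ico (n (blockIndex n N)) N, f (blockIndex n N) i = ∑ i ∈ range N, g i := by
    filter_upwards [eventually_ge_atTop (n 0)] with N hN
    rw [← hsum_blocks, ← hg _ _ (lt_apply_blockIndex_succ hn).le,
      sum_range_add_sum_Ico _ (apply_blockIndex_le hN)]
  have hrem : Tendsto (fun N => ∑ i ∈ Ico (n (blockIndex n N)) N, f (blockIndex n N) i) atTop
      (𝓝 0) := by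
    refine squeeze_zero_norm' ?_ (hb.tendsto_atTop_zero.comp (tendsto_blockIndex hn))
    filter_upwards [eventually_ge_atTop (n 0)] with N hN
    exact hf _ N (apply_blockIndex_le hN) (lt_apply_blockIndex_succ hn).le
  exact ⟨_, ((tendsto_const_nhds.add (hc.hasSum.tendsto_sum_nat.comp
    (tendsto_blockIndex hn))).add hrem).congr' hsplit⟩

end Blocks

theorem stmt6 (a : ℕ → EuclideanSpace ℝ (Fin 2))
    (h : Tendsto (fun n => ‖a n‖) atTop (nhds 0)) :
    ∃ ε : ℕ → ℝ, (∀ i, ε i = 1 ∨ ε i = -1) ∧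
      ∃ l, Tendsto (fun N => ∑ i ∈ Finset.range N, ε i • a i) atTop (nhds l) := by
  obtain ⟨n, hn, hna⟩ := extraction_forall_of_eventually fun k =>
    eventually_forall_ge_atTop.2 (h.eventually (ge_mem_nhds (pow_pos one_half_pos k)))
  choose ε hε hεa using fun k => exists_signs_norm_sum_Ico_le a (by positivity)
    fun i hi => hna k i (mem_Ico.1 hi).1
  exact ⟨fun i => ε (blockIndex n i) i, fun i => hε _ _, exists_tendsto_sum_range_blockIndex hn
    (summable_geometric_two.mul_left 2) (fun k i => ε k i • a i) hεa⟩
end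

section
/- Let ‖·‖_d be any norm on ℝ² (all norms on ℝ² are equivalent). If (aᵢ) is a sequence with ‖aᵢ‖_d → 0, then there exists a choice of signs εᵢ ∈ {1,-1} such that ∑ εᵢ aᵢ converges with respect to ‖·‖_d. -/
/-!
Cut `ℕ` into consecutive blocks `[φ j, φ (j + 1))` on which `‖aᵢ‖ ≤ 2⁻ʲ`. Inside each block a
prefix version of the Bárány–Grinberg lemma gives signs keeping every partial sum of the block
within `2 · dim F · 2⁻ʲ`; these bounds are summable, so the signed partial sums are Cauchy.

The Bárány–Grinberg signs come from rounding the point `(1/2, …, 1/2)` of the cube to a vertex.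
While more than `d = dim F` coordinates are fractional, move along a linear relation among the
vectors of the first `d + 1` fractional indices until one of those coordinates reaches `0` or `1`.
This leaves every prefix sum that reaches past these `d + 1` indices unchanged, and a shorter
prefix contains at most `d` fractional coordinates, each contributing at most `b` to the error.
-/

open Filter Finset Module

theorem exists_card_filter_lt_gt {S : Finset ℕ} {d : ℕ} (h : d < S.card) :
    ∃ m, d < (S.filter (· < m)).card ∧ ∀ p < m, (S.filter (· < p)).card ≤ d := by
  have hex : ∃ m, d < (S.filter (· < m)).card := by
    obtain ⟨M, hM⟩ := S.exists_nat_subset_range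
    exact ⟨M, by rwa [filter_true_of_mem fun i hi => mem_range.1 (hM hi)]⟩
  exact ⟨Nat.find hex, Nat.find_spec hex, fun p hp => not_lt.1 (Nat.find_min hex hp)⟩

theorem exists_sum_smul_eq_zero_of_finrank_lt_card {K V ι : Type*} [Field K] [AddCommGroup V]
    [Module K V] [FiniteDimensional K V] (v : ι → V) {T : Finset ι}
    (hT : finrank K V < T.card) :
    ∃ g : ι → K, (∀ i ∉ T, g i = 0) ∧ ∑ i ∈ T, g i • v i = 0 ∧ ∃ i ∈ T, g i ≠ 0 := by
  classical
  obtain ⟨g, hg, i, hi, hgi⟩ := (not_linearIndepOn_finset_iff (v := v)).1 fun hli =>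
    hT.not_ge (by simpa using hli.fintype_card_le_finrank)
  refine ⟨fun i => if i ∈ T then g i else 0, fun i hi => if_neg hi, ?_, i, hi, by simpa [hi]⟩
  rw [← hg]
  exact sum_congr rfl fun i hi => by simp only [if_pos hi]

/-- The time at which `a + t * c` leaves `[0, 1]`, for `t ≥ 0` and `c ≠ 0`. -/
noncomputable def exitTime (a c : ℝ) : ℝ := max ((1 - a) / c) (-a / c)

theorem exitTime_nonneg {a : ℝ} (ha : a ∈ Set.Icc 0 1) (c : ℝ) : 0 ≤ exitTime a c := by
  obtain ⟨ha₀, ha₁⟩ := ha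
  rcases le_or_gt c 0 with hc | hc
  · exact le_max_of_le_right (div_nonneg_of_nonpos (by linarith) hc)
  · exact le_max_of_le_left (div_nonneg (by linarith) hc.le)

theorem exitTime_of_neg (a : ℝ) {c : ℝ} (hc : c < 0) : exitTime a c = -a / c :=
  max_eq_right (div_le_div_of_nonpos_of_le hc.le (by linarith))

theorem exitTime_of_pos (a : ℝ) {c : ℝ} (hc : 0 < c) : exitTime a c = (1 - a) / c :=
  max_eq_left (div_le_div_of_nonneg_right (by linarith) hc.le)

theorem add_mul_mem_Icc_of_le_exitTime {a c t : ℝ} (ha : a ∈ Set.Icc 0 1) (hc : c ≠ 0)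
    (ht : 0 ≤ t) (htc : t ≤ exitTime a c) : a + t * c ∈ Set.Icc 0 1 := by
  obtain ⟨ha₀, ha₁⟩ := ha
  rcases hc.lt_or_gt with hc | hc
  · rw [exitTime_of_neg a hc, le_div_iff_of_neg hc] at htc
    constructor <;> nlinarith
  · rw [exitTime_of_pos a hc, le_div_iff₀ hc] at htc
    constructor <;> nlinarith

theorem add_exitTime_mul_notMem_Ioo (a : ℝ) {c : ℝ} (hc : c ≠ 0) :
    a + exitTime a c * c ∉ Set.Ioo 0 1 := by
  rcases hc.lt_or_gt with hc' | hc'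
  · simp [exitTime_of_neg a hc', div_mul_cancel₀ _ hc]
  · simp [exitTime_of_pos a hc', div_mul_cancel₀ _ hc]

theorem exists_add_mul_mem_Icc_notMem_Ioo {ι : Type*} {T : Finset ι} {α g : ι → ℝ}
    (hα : ∀ i ∈ T, α i ∈ Set.Icc 0 1) (hg : ∃ i ∈ T, g i ≠ 0) :
    ∃ t : ℝ, (∀ i ∈ T, α i + t * g i ∈ Set.Icc 0 1) ∧ ∃ i ∈ T, α i + t * g i ∉ Set.Ioo 0 1 := by
  classical
  have hT : (T.filter (g · ≠ 0)).Nonempty := by simpa [Finset.Nonempty] using hg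
  obtain ⟨i₀, hi₀, hmin⟩ := exists_min_image _ (fun i => exitTime (α i) (g i)) hT
  rw [mem_filter] at hi₀
  refine ⟨exitTime (α i₀) (g i₀), fun i hi => ?_, i₀, hi₀.1,
    add_exitTime_mul_notMem_Ioo (α i₀) hi₀.2⟩
  rcases eq_or_ne (g i) 0 with hgi | hgi
  · simpa [hgi] using hα i hi
  · exact add_mul_mem_Icc_of_le_exitTime (hα i hi) hgi (exitTime_nonneg (hα i₀ hi₀.1) _)
      (hmin i (mem_filter.2 ⟨hi, hgi⟩))

section Rounding

variable {F : Type*} [NormedAddCommGroup F] [NormedSpace ℝ F]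

theorem norm_sub_smul_le {α ε : ℝ} {x : F} {b : ℝ} (hα : α ∈ Set.Icc 0 1) (hε : ε = 0 ∨ ε = 1)
    (hx : ‖x‖ ≤ b) : ‖(α - ε) • x‖ ≤ b := by
  have : |α - ε| ≤ 1 := by
    obtain ⟨h₀, h₁⟩ := hα
    rcases hε with rfl | rfl <;> rw [abs_le] <;> constructor <;> linarith
  rw [norm_smul, Real.norm_eq_abs]
  exact (mul_le_of_le_one_left (norm_nonneg x) this).trans hx

noncomputable def fractionalIndices (I : Finset ℕ) (α : ℕ → ℝ) : Finset ℕ :=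
  I.filter (α · ∈ Set.Ioo 0 1)

theorem norm_sum_filter_lt_sub_smul_le (I : Finset ℕ) {v : ℕ → F} {b : ℝ}
    (hv : ∀ i ∈ I, ‖v i‖ ≤ b) {α ε : ℕ → ℝ} (hα : ∀ i ∈ I, α i ∈ Set.Icc 0 1)
    (hε : ∀ i, ε i = 0 ∨ ε i = 1) (hαε : ∀ i ∈ I, α i ∉ Set.Ioo 0 1 → ε i = α i) (p : ℕ) :
    ‖∑ i ∈ I.filter (· < p), (α i - ε i) • v i‖ ≤
      ((fractionalIndices I α).filter (· < p)).card * b := by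
  have hsub : (fractionalIndices I α).filter (· < p) ⊆ I.filter (· < p) :=
    filter_subset_filter _ (filter_subset _ _)
  rw [← sum_subset hsub fun i hi hi' => ?_]
  · refine (norm_sum_le_of_le _ fun i hi => ?_).trans (by rw [sum_const, nsmul_eq_mul])
    have hi : i ∈ I := (mem_filter.1 (mem_filter.1 hi).1).1
    exact norm_sub_smul_le (hα i hi) (hε i) (hv i hi)
  · simp only [fractionalIndices, mem_filter] at hi hi'
    rw [hαε i hi.1 fun h => hi' ⟨⟨hi.1, h⟩, hi.2⟩, sub_self, zero_smul]

theorem exists_rounding_of_card_fractionalIndices_le (I : Finset ℕ) {v : ℕ → F} {b : ℝ}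
    (hb : 0 ≤ b) (hv : ∀ i ∈ I, ‖v i‖ ≤ b) {α : ℕ → ℝ} (hα : ∀ i ∈ I, α i ∈ Set.Icc 0 1)
    {d : ℕ} (hd : (fractionalIndices I α).card ≤ d) :
    ∃ ε : ℕ → ℝ, (∀ i, ε i = 0 ∨ ε i = 1) ∧ (∀ i ∈ I, α i ∉ Set.Ioo 0 1 → ε i = α i) ∧
      ∀ p, ‖∑ i ∈ I.filter (· < p), (α i - ε i) • v i‖ ≤ d * b := by
  have hε : ∀ i, (if α i = 1 then 1 else 0 : ℝ) = 0 ∨ (if α i = 1 then 1 else 0 : ℝ) = 1 :=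
    fun i => by split_ifs <;> simp
  have hαε : ∀ i ∈ I, α i ∉ Set.Ioo 0 1 → (if α i = 1 then 1 else 0 : ℝ) = α i := by
    intro i hi hfrac
    have := hα i hi
    split_ifs with h
    · exact h.symm
    · simp only [Set.mem_Icc, Set.mem_Ioo] at this hfrac
      grind
  refine ⟨_, hε, hαε, fun p => (norm_sum_filter_lt_sub_smul_le I hv hα hε hαε p).trans ?_⟩
  gcongr
  exact (card_filter_le _ _).trans hd

/-- The step moves along a linear relation among the vectors of the first `finrank ℝ F + 1`
fractional indices, which all lie below `m`. -/
theorem exists_rounding_step [FiniteDimensional ℝ F] (I : Finset ℕ) (v : ℕ → F) {α : ℕ → ℝ}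
    (hα : ∀ i ∈ I, α i ∈ Set.Icc 0 1) (hcard : finrank ℝ F < (fractionalIndices I α).card) :
    ∃ (α' : ℕ → ℝ) (m : ℕ), (∀ i ∈ I, α' i ∈ Set.Icc 0 1) ∧
      (fractionalIndices I α').card < (fractionalIndices I α).card ∧
      (∀ i ∈ I, α i ∉ Set.Ioo 0 1 → α' i = α i) ∧
      (∀ p < m, ((fractionalIndices I α).filter (· < p)).card ≤ finrank ℝ F) ∧
      ∀ p ≥ m, ∑ i ∈ I.filter (· < p), α' i • v i = ∑ i ∈ I.filter (· < p), α i • v i := by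
  set S := fractionalIndices I α
  obtain ⟨m, hm, hm_min⟩ := exists_card_filter_lt_gt hcard
  set T := S.filter (· < m)
  have hTS : T ⊆ S := filter_subset _ _
  have hTI : T ⊆ I := hTS.trans (filter_subset _ _)
  obtain ⟨g, hgT, hg, hg₀⟩ := exists_sum_smul_eq_zero_of_finrank_lt_card v hm
  obtain ⟨t, ht, i₀, hi₀, hi₀_bdry⟩ :=
    exists_add_mul_mem_Icc_notMem_Ioo (fun i hi => hα i (hTI hi)) hg₀
  have hα'_of_notMem : ∀ i ∉ T, α i + t * g i = α i := fun i hi => by simp [hgT i hi]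
  refine ⟨fun i => α i + t * g i, m, fun i hi => ?_, ?_, fun i _ hfrac => ?_, hm_min,
    fun p hp => ?_⟩
  · by_cases hiT : i ∈ T
    · exact ht i hiT
    · simpa only [hα'_of_notMem i hiT] using hα i hi
  · have hsub : fractionalIndices I (fun i => α i + t * g i) ⊆ S.erase i₀ := by
      intro i hi
      simp only [fractionalIndices, mem_filter] at hi
      refine mem_erase.2 ⟨by rintro rfl; exact hi₀_bdry hi.2, ?_⟩
      by_cases hiT : i ∈ T
      · exact hTS hiT
      · exact mem_filter.2 ⟨hi.1, hα'_of_notMem i hiT ▸ hi.2⟩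
    exact (card_le_card hsub).trans_lt (card_erase_lt_of_mem (hTS hi₀))
  · exact hα'_of_notMem i fun hiT => hfrac (mem_filter.1 (hTS hiT)).2
  · have hTp : T ⊆ I.filter (· < p) := fun i hi =>
      mem_filter.2 ⟨hTI hi, ((mem_filter.1 hi).2).trans_le hp⟩
    have hshift : ∑ i ∈ I.filter (· < p), (t * g i) • v i = 0 := by
      rw [← sum_subset hTp fun i _ hi => by rw [hgT i hi, mul_zero, zero_smul]]
      simp_rw [mul_smul]
      rw [← smul_sum, hg, smul_zero]
    simp only [add_smul, sum_add_distrib, hshift, add_zero]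

theorem exists_rounding_norm_sum_filter_lt_le [FiniteDimensional ℝ F] (I : Finset ℕ)
    {v : ℕ → F} {b : ℝ} (hb : 0 ≤ b) (hv : ∀ i ∈ I, ‖v i‖ ≤ b) (α : ℕ → ℝ)
    (hα : ∀ i ∈ I, α i ∈ Set.Icc 0 1) :
    ∃ ε : ℕ → ℝ, (∀ i, ε i = 0 ∨ ε i = 1) ∧ (∀ i ∈ I, α i ∉ Set.Ioo 0 1 → ε i = α i) ∧
      ∀ p, ‖∑ i ∈ I.filter (· < p), (α i - ε i) • v i‖ ≤ finrank ℝ F * b := by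
  induction hS : (fractionalIndices I α).card using Nat.strong_induction_on
    generalizing α with
  | _ n ih =>
  by_cases hn : n ≤ finrank ℝ F
  · exact exists_rounding_of_card_fractionalIndices_le I hb hv hα (hS ▸ hn)
  obtain ⟨α', m, hα', hcard, hα'α, hm, hsum⟩ := exists_rounding_step I v hα (by omega)
  obtain ⟨ε, hε, hα'ε, hbound⟩ := ih _ (hS ▸ hcard) α' hα' rfl
  have hαε : ∀ i ∈ I, α i ∉ Set.Ioo 0 1 → ε i = α i := fun i hi hfrac =>
    (hα'ε i hi (hα'α i hi hfrac ▸ hfrac)).trans (hα'α i hi hfrac)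
  refine ⟨ε, hε, hαε, fun p => ?_⟩
  rcases lt_or_ge p m with hp | hp
  · refine (norm_sum_filter_lt_sub_smul_le I hv hα hε hαε p).trans ?_
    gcongr
    exact hm p hp
  · simpa only [sub_smul, sum_sub_distrib, hsum p hp] using hbound p

theorem exists_signs_norm_sum_filter_lt_le [FiniteDimensional ℝ F] (I : Finset ℕ)
    {w : ℕ → F} {b : ℝ} (hb : 0 ≤ b) (hw : ∀ i ∈ I, ‖w i‖ ≤ b) :
    ∃ σ : ℕ → ℝ, (∀ i, σ i = 1 ∨ σ i = -1) ∧
      ∀ p, ‖∑ i ∈ I.filter (· < p), σ i • w i‖ ≤ 2 * finrank ℝ F * b := by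
  obtain ⟨ε, hε, -, hbound⟩ :=
    exists_rounding_norm_sum_filter_lt_le I hb hw (fun _ => 1 / 2) fun _ _ => by norm_num
  refine ⟨fun i => 1 - 2 * ε i, fun i => by rcases hε i with h | h <;> norm_num [h],
    fun p => ?_⟩
  have : ∑ i ∈ I.filter (· < p), (1 - 2 * ε i) • w i
      = (2 : ℝ) • ∑ i ∈ I.filter (· < p), (1 / 2 - ε i) • w i := by
    rw [smul_sum]
    exact sum_congr rfl fun i _ => by rw [smul_smul]; congr 1; ring
  rw [this, norm_smul, Real.norm_two, mul_assoc]
  exact mul_le_mul_of_nonneg_left (hbound p) zero_le_two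

end Rounding

section Blocks

variable {E : Type*} [SeminormedAddCommGroup E] {f : ℕ → E} {φ : ℕ → ℕ} {C : ℝ}

theorem norm_sum_Ico_le_of_block_bound (hφ : StrictMono φ)
    (hf : ∀ j p, ‖∑ i ∈ (Ico (φ j) (φ (j + 1))).filter (· < p), f i‖ ≤ C * (1 / 2) ^ j)
    {k n : ℕ} (hn : φ k ≤ n) : ‖∑ i ∈ Ico (φ k) n, f i‖ ≤ 2 * C * (1 / 2) ^ k := by
  have hC : 0 ≤ C := by simpa using (norm_nonneg _).trans (hf 0 0)
  suffices ∀ j k, φ k ≤ n → n ≤ φ (k + j) → ‖∑ i ∈ Ico (φ k) n, f i‖ ≤ 2 * C * (1 / 2) ^ k from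
    this n k hn ((Nat.le_add_left n k).trans hφ.le_apply)
  intro j
  induction j with
  | zero =>
    intro k h₁ h₂
    rw [show n = φ k from le_antisymm h₂ h₁, Ico_self, sum_empty, norm_zero]
    positivity
  | succ j ih =>
    intro k h₁ h₂
    rcases le_or_gt n (φ (k + 1)) with hn' | hn'
    · have := hf k n
      rw [Ico_filter_lt, min_eq_right hn'] at this
      nlinarith [pow_pos (one_half_pos (α := ℝ)) k]
    · rw [← sum_Ico_consecutive _ (hφ (Nat.lt_succ_self k)).le hn'.le]
      have h₁ := hf k (φ (k + 1))
      rw [Ico_filter_lt, min_self] at h₁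
      have h₂ := ih (k + 1) hn'.le (by rwa [add_right_comm])
      calc _ ≤ _ := norm_add_le _ _
        _ ≤ C * (1 / 2) ^ k + 2 * C * (1 / 2) ^ (k + 1) := add_le_add h₁ h₂
        _ = 2 * C * (1 / 2) ^ k := by ring

theorem cauchySeq_sum_range_of_block_bound (hφ : StrictMono φ)
    (hf : ∀ j p, ‖∑ i ∈ (Ico (φ j) (φ (j + 1))).filter (· < p), f i‖ ≤ C * (1 / 2) ^ j) :
    CauchySeq fun n => ∑ i ∈ range n, f i := by
  rw [Metric.cauchySeq_iff']
  intro δ hδ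
  have hlim : Tendsto (fun k => 2 * C * (1 / 2 : ℝ) ^ k) atTop (nhds 0) := by
    simpa using (tendsto_pow_atTop_nhds_zero_of_lt_one (by norm_num) one_half_lt_one).const_mul
      (2 * C)
  obtain ⟨k, hk⟩ := (hlim.eventually (gt_mem_nhds hδ)).exists
  refine ⟨φ k, fun n hn => ?_⟩
  rw [dist_eq_norm, ← sum_Ico_eq_sub _ hn]
  exact (norm_sum_Ico_le_of_block_bound hφ hf hn).trans_lt hk

end Blocks

theorem Nat.findGreatest_le_eq_of_strictMono {φ : ℕ → ℕ} (hφ : StrictMono φ) {i j : ℕ}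
    (h₁ : φ j ≤ i) (h₂ : i < φ (j + 1)) : Nat.findGreatest (φ · ≤ i) i = j := by
  refine Nat.findGreatest_eq_iff.2 ⟨hφ.le_apply.trans h₁, fun _ => h₁, fun n hn _ => ?_⟩
  exact (h₂.trans_le (hφ.monotone hn)).not_ge

theorem stmt10 (F : Type*) [NormedAddCommGroup F] [NormedSpace ℝ F]
    (hdim : Module.finrank ℝ F = 2)
    (a : ℕ → F) (h : Tendsto (fun n => ‖a n‖) atTop (nhds 0)) :
    ∃ ε : ℕ → ℝ, (∀ i, ε i = 1 ∨ ε i = -1) ∧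
      ∃ l, Tendsto (fun N => ∑ i ∈ Finset.range N, ε i • a i) atTop (nhds l) := by
  have : FiniteDimensional ℝ F := .of_finrank_pos (by omega)
  obtain ⟨φ, hφ, hφa⟩ : ∃ φ : ℕ → ℕ, StrictMono φ ∧ ∀ j, ∀ i ≥ φ j, ‖a i‖ ≤ (1 / 2) ^ j :=
    extraction_forall_of_eventually fun j =>
      eventually_forall_ge_atTop.2 (h.eventually (eventually_le_nhds (by positivity)))
  choose σ hσ hσa using fun j => exists_signs_norm_sum_filter_lt_le (Ico (φ j) (φ (j + 1)))
    (by positivity : (0 : ℝ) ≤ (1 / 2) ^ j) fun i hi => hφa j i (mem_Ico.1 hi).1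
  refine ⟨fun i => σ (Nat.findGreatest (φ · ≤ i) i) i, fun i => hσ _ i,
    cauchySeq_tendsto_of_complete (cauchySeq_sum_range_of_block_bound hφ (C := 4) fun j p => ?_)⟩
  have hblock : ∀ i ∈ (Ico (φ j) (φ (j + 1))).filter (· < p),
      σ (Nat.findGreatest (φ · ≤ i) i) i • a i = σ j i • a i := fun i hi => by
    obtain ⟨h₁, h₂⟩ := mem_Ico.1 (mem_filter.1 hi).1
    rw [Nat.findGreatest_le_eq_of_strictMono hφ h₁ h₂]
  rw [sum_congr rfl hblock]
  exact (hσa j p).trans_eq (by rw [hdim]; norm_num)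
end

section
/- Suppose ℝⁿ admits a partition into finitely many sets U₁,...,U_K such that any two vectors u, v in the same set satisfy ‖u - v‖ ≤ max(‖u‖, ‖v‖). Then for any finite family of vectors in ℝⁿ each of norm at most ε, there is a choice of signs εᵢ ∈ {1,-1} with ‖∑ εᵢ aᵢ‖ ≤ K·ε. -/
theorem stmt11 (n K m : ℕ) (U : Fin K → Set (EuclideanSpace ℝ (Fin n)))
    (hcover : (⋃ i, U i) = Set.univ)
    (hpair : ∀ i, ∀ u ∈ U i, ∀ v ∈ U i, ‖u - v‖ ≤ max ‖u‖ ‖v‖)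
    (a : Fin m → EuclideanSpace ℝ (Fin n)) (ε : ℝ) (hε : 0 < ε)
    (ha : ∀ j, ‖a j‖ ≤ ε) :
    ∃ s : Fin m → ℝ, (∀ j, s j = 1 ∨ s j = -1) ∧
      ‖∑ j, s j • a j‖ ≤ K * ε := by
  classical
  have hmem : ∀ x : EuclideanSpace ℝ (Fin n), ∃ i, x ∈ U i := by
    intro x
    have hx : x ∈ ⋃ i, U i := hcover ▸ Set.mem_univ x
    simpa [Set.mem_iUnion] using hx
  choose f hf using hmem
  have key : ∀ c : ℕ, ∀ T : Finset (Fin m), T.card ≤ c →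
      ∀ a : Fin m → EuclideanSpace ℝ (Fin n), (∀ j, ‖a j‖ ≤ ε) →
      (∀ j ∉ T, a j = 0) →
      ∃ s : Fin m → ℝ, (∀ j, s j = 1 ∨ s j = -1) ∧ ‖∑ j, s j • a j‖ ≤ K * ε := by
    intro c
    induction c with
    | zero =>
      intro T hT a ha h0
      refine ⟨fun _ => 1, fun _ => Or.inl rfl, ?_⟩
      have hz : ∀ j, a j = 0 := by
        intro j
        apply h0
        have : T = ∅ := Finset.card_eq_zero.mp (Nat.le_zero.mp hT)
        simp [this]
      simp only [hz, smul_zero, Finset.sum_const_zero, norm_zero]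
      positivity
    | succ c ih =>
      intro T hT a ha h0
      by_cases hTK : T.card ≤ K
      · refine ⟨fun _ => 1, fun _ => Or.inl rfl, ?_⟩
        have h1 : ∑ j, (1 : ℝ) • a j = ∑ j ∈ T, a j := by
          rw [Finset.sum_subset (Finset.subset_univ T)
            (fun x _ hx => by simp [h0 x hx])]
          simp
        rw [h1]
        calc ‖∑ j ∈ T, a j‖ ≤ ∑ j ∈ T, ‖a j‖ := norm_sum_le _ _
          _ ≤ ∑ _j ∈ T, ε := Finset.sum_le_sum (fun j _ => ha j)
          _ = T.card * ε := by simp [mul_comm]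
          _ ≤ K * ε := by
              exact mul_le_mul_of_nonneg_right (by exact_mod_cast hTK) hε.le
      · push_neg at hTK
        obtain ⟨j, hjT, k, hkT, hjk, hfe⟩ :=
          Finset.exists_ne_map_eq_of_card_lt_of_maps_to
            (t := (Finset.univ : Finset (Fin K)))
            (by simpa using hTK) (fun i _ => Finset.mem_univ (f (a i)))
        set a' : Fin m → EuclideanSpace ℝ (Fin n) :=
          Function.update (Function.update a j (a j - a k)) k 0 with ha'def
        have ha'j : a' j = a j - a k := by
          simp [ha'def, Function.update_of_ne hjk, Function.update_self]
        have ha'k : a' k = 0 := by simp [ha'def]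
        have ha'other : ∀ i, i ≠ j → i ≠ k → a' i = a i := by
          intro i hij hik
          simp [ha'def, Function.update_of_ne hik, Function.update_of_ne hij]
        have hcard : (T.erase k).card ≤ c := by
          have := Finset.card_erase_of_mem hkT
          omega
        have ha'norm : ∀ i, ‖a' i‖ ≤ ε := by
          intro i
          rcases eq_or_ne i k with rfl | hik
          · simp [ha'k]; exact hε.le
          rcases eq_or_ne i j with rfl | hij
          · rw [ha'j]
            have h1 := hf (a i)
            have h2 : a k ∈ U (f (a i)) := hfe ▸ hf (a k)
            calc ‖a i - a k‖ ≤ max ‖a i‖ ‖a k‖ := hpair _ _ h1 _ h2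
              _ ≤ ε := max_le (ha i) (ha k)
          · rw [ha'other i hij hik]; exact ha i
        have ha'0 : ∀ i, i ∉ T.erase k → a' i = 0 := by
          intro i hi
          rcases eq_or_ne i k with rfl | hik
          · exact ha'k
          rcases eq_or_ne i j with rfl | hij
          · exact absurd (Finset.mem_erase.mpr ⟨hik, hjT⟩) hi
          · rw [ha'other i hij hik]
            exact h0 i (fun hiT => hi (Finset.mem_erase.mpr ⟨hik, hiT⟩))
        obtain ⟨s', hs'sign, hs'⟩ := ih (T.erase k) hcard a' ha'norm ha'0
        refine ⟨Function.update s' k (-(s' j)), ?_, ?_⟩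
        · intro i
          rcases eq_or_ne i k with rfl | hik
          · rcases hs'sign j with h | h <;> simp [h]
          · rw [Function.update_of_ne hik]; exact hs'sign i
        · have hsplit : ∀ (g : Fin m → EuclideanSpace ℝ (Fin n)),
              ∑ i, g i = ∑ i ∈ Finset.univ \ {j, k}, g i + (g j + g k) := by
            intro g
            rw [← Finset.sum_sdiff (Finset.subset_univ ({j, k} : Finset (Fin m))),
              Finset.sum_pair hjk]
          have heq : ∑ i, Function.update s' k (-(s' j)) i • a i
              = ∑ i, s' i • a' i := by
            rw [hsplit, hsplit]
            congr 1
            · apply Finset.sum_congr rfl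
              intro i hi
              simp only [Finset.mem_sdiff, Finset.mem_insert, Finset.mem_singleton,
                not_or] at hi
              rw [Function.update_of_ne hi.2.2, ha'other i hi.2.1 hi.2.2]
            · rw [Function.update_of_ne hjk, Function.update_self, ha'j, ha'k,
                smul_zero, add_zero, smul_sub, neg_smul]
              abel
          rw [heq]
          exact hs'
  exact key m Finset.univ (by simp) a ha (by simp)
end

section
/- In ℝ³ there exists a finite partition into sets U₁,...,U_K such that any two vectors u, v in the same set satisfy ‖u - v‖ ≤ max(‖u‖, ‖v‖): namely, cones over a triangulation of the sphere into spherical triangles of diameter at most π/3. -/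
/-!
Cover space by finitely many cones of half-angle `π / 6` around directions `d`, which exist by
compactness of the unit sphere. By the triangle inequality for angles, two nonzero vectors in one
cone make an angle of at most `π / 3`, so `⟪u, v⟫ ≥ ‖u‖ ‖v‖ cos (π / 3) = ‖u‖ ‖v‖ / 2`, and the
cosine rule then bounds `‖u - v‖` by the longer of `u` and `v`.
-/

open RealInnerProductSpace InnerProductGeometry Real

section

variable {E : Type*} [NormedAddCommGroup E] [InnerProductSpace ℝ E]

/-- `angle d 0 = π / 2`, so the apex `0` is added explicitly. -/
def angularCone (d : E) (θ : ℝ) : Set E := {v | v = 0 ∨ angle d v ≤ θ}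

lemma smul_mem_angularCone {d v : E} {θ r : ℝ} (hv : v ∈ angularCone d θ) (hr : 0 ≤ r) :
    r • v ∈ angularCone d θ := by
  rcases hr.eq_or_lt with rfl | hr
  · exact Or.inl (zero_smul ℝ v)
  · rcases hv with rfl | hv
    · exact Or.inl (smul_zero r)
    · exact Or.inr ((angle_smul_right_of_pos d v hr).trans_le hv)

lemma angle_le_of_mem_angularCone {d u v : E} {θ : ℝ} (hu : u ∈ angularCone d θ)
    (hv : v ∈ angularCone d θ) (hu0 : u ≠ 0) (hv0 : v ≠ 0) : angle u v ≤ 2 * θ := by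
  have hdu : angle d u ≤ θ := hu.resolve_left hu0
  have hdv : angle d v ≤ θ := hv.resolve_left hv0
  calc angle u v ≤ angle u d + angle d v := angle_le_angle_add_angle u d v
    _ = angle d u + angle d v := by rw [angle_comm u d]
    _ ≤ 2 * θ := by linarith

lemma half_mul_norm_le_inner_of_angle_le {u v : E} (h : angle u v ≤ π / 3) :
    ‖u‖ * ‖v‖ / 2 ≤ ⟪u, v⟫ := by
  have hcos : 1 / 2 ≤ cos (angle u v) := by
    rw [← cos_pi_div_three]
    exact cos_le_cos_of_nonneg_of_le_pi (angle_nonneg u v) (by linarith [pi_pos]) h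
  rw [← cos_angle_mul_norm_mul_norm]
  nlinarith [mul_nonneg (norm_nonneg u) (norm_nonneg v)]

lemma half_mul_norm_le_inner_of_mem_angularCone {d u v : E} (hu : u ∈ angularCone d (π / 6))
    (hv : v ∈ angularCone d (π / 6)) : ‖u‖ * ‖v‖ / 2 ≤ ⟪u, v⟫ := by
  rcases eq_or_ne u 0 with rfl | hu0
  · simp
  rcases eq_or_ne v 0 with rfl | hv0
  · simp
  apply half_mul_norm_le_inner_of_angle_le
  linarith [angle_le_of_mem_angularCone hu hv hu0 hv0]

/-- Cosine rule: an angle of at most `π / 3` is never the largest angle of a triangle. -/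
lemma norm_sub_le_max_of_half_mul_norm_le_inner {u v : E} (h : ‖u‖ * ‖v‖ / 2 ≤ ⟪u, v⟫) :
    ‖u - v‖ ≤ max ‖u‖ ‖v‖ := by
  have hsq : ‖u - v‖ ^ 2 ≤ max ‖u‖ ‖v‖ ^ 2 := by
    rw [norm_sub_sq_real]
    rcases max_cases ‖u‖ ‖v‖ with ⟨hm, hle⟩ | ⟨hm, hle⟩ <;> rw [hm] <;>
      nlinarith [norm_nonneg u, norm_nonneg v]
  exact (pow_le_pow_iff_left₀ (norm_nonneg _) ((norm_nonneg u).trans (le_max_left _ _))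
    two_ne_zero).mp hsq

lemma exists_finset_angularCone_cover [FiniteDimensional ℝ E] [Nontrivial E] {θ : ℝ}
    (hθ : 0 < θ) : ∃ t : Finset E, ∀ v, ∃ d ∈ t, v ∈ angularCone d θ := by
  obtain ⟨t, -, ht_cover⟩ := (isCompact_sphere (0 : E) 1).elim_nhds_subcover
    (fun d => {v | angle d v < θ}) fun d hd => by
      have hd0 : d ≠ 0 := ne_zero_of_mem_unit_sphere ⟨d, hd⟩
      refine ContinuousAt.eventually_lt ?_ continuousAt_const (by rwa [angle_self hd0])
      exact (continuousAt_angle (x := (d, d)) hd0 hd0).comp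
        (continuousAt_const.prodMk continuousAt_id)
  have hdir (v : E) : ∃ w ∈ Metric.sphere (0 : E) 1, ∃ r : ℝ, 0 ≤ r ∧ v = r • w := by
    rcases eq_or_ne v 0 with rfl | hv0
    · obtain ⟨w, hw⟩ := NormedSpace.sphere_nonempty_rclike ℝ (E := E) zero_le_one
      exact ⟨w, hw, 0, le_rfl, (zero_smul ℝ w).symm⟩
    · refine ⟨‖v‖⁻¹ • v, ?_, ‖v‖, norm_nonneg v, ?_⟩
      · simp [norm_smul, hv0]
      · rw [smul_smul, mul_inv_cancel₀ (norm_ne_zero_iff.mpr hv0), one_smul]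
  refine ⟨t, fun v => ?_⟩
  obtain ⟨w, hw, r, hr, rfl⟩ := hdir v
  obtain ⟨d, hd, hdw⟩ := Set.mem_iUnion₂.mp (ht_cover hw)
  exact ⟨d, hd, smul_mem_angularCone (Or.inr (le_of_lt hdw)) hr⟩

end

theorem stmt15 :
    ∃ (K : ℕ) (U : Fin K → Set (EuclideanSpace ℝ (Fin 3))),
      (⋃ i, U i) = Set.univ ∧
      (∀ i, ∀ x ∈ U i, ∀ r : ℝ, 0 ≤ r → r • x ∈ U i) ∧
      (∀ i, ∀ u ∈ U i, ∀ v ∈ U i, u ≠ 0 → v ≠ 0 → ⟪u, v⟫ ≥ ‖u‖ * ‖v‖ / 2) ∧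
      ∀ i, ∀ u ∈ U i, ∀ v ∈ U i, ‖u - v‖ ≤ max ‖u‖ ‖v‖ := by
  obtain ⟨t, ht⟩ := exists_finset_angularCone_cover (E := EuclideanSpace ℝ (Fin 3))
    (by positivity : 0 < π / 6)
  refine ⟨t.card, fun i => angularCone (t.equivFin.symm i : EuclideanSpace ℝ (Fin 3)) (π / 6),
    ?_, fun i x hx r hr => smul_mem_angularCone hx hr,
    fun i u hu v hv _ _ => half_mul_norm_le_inner_of_mem_angularCone hu hv,
    fun i u hu v hv => norm_sub_le_max_of_half_mul_norm_le_inner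
      (half_mul_norm_le_inner_of_mem_angularCone hu hv)⟩
  refine Set.eq_univ_of_forall fun v => ?_
  obtain ⟨d, hd, hv⟩ := ht v
  exact Set.mem_iUnion.mpr ⟨t.equivFin ⟨d, hd⟩, by simpa using hv⟩
end

section
/- Any finite multiset of more than 6 vectors in ℝ², each of norm less than ε, contains two vectors u, v lying in a common 60° sector, and hence with ‖u - v‖ < ε. -/
open RealInnerProductSpace Classical

/-!
Identify ℝ² with ℂ. The six sectors `((k - 1)π/3, kπ/3]` cover the plane, so two of seven
vectors lie in a common sector; their angle is then less than `π/3`, whence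
`⟪u, v⟫ ≥ ‖u‖ ‖v‖ / 2`, and the law of cosines gives `‖u - v‖ ≤ max ‖u‖ ‖v‖`.
-/

open InnerProductGeometry Real

/-- Using the ceiling rather than the floor makes the sectors of `arg z ∈ (-π, π]` exactly the
six integers `-2, …, 3`, with no wrap-around at `π`. -/
noncomputable def Complex.sixthSector (z : ℂ) : ℤ := ⌈z.arg / (π / 3)⌉

theorem Multiset.exists_mem_mem_erase_map_eq_of_card_lt {α β : Type*} [DecidableEq α]
    {s : Multiset α} {t : Finset β} (f : α → β) (hf : ∀ a ∈ s, f a ∈ t)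
    (hcard : t.card < Multiset.card s) : ∃ a ∈ s, ∃ b ∈ s.erase a, f a = f b := by
  induction s using Multiset.induction_on generalizing t with
  | empty => simp at hcard
  | cons a s ih =>
    by_cases hdup : ∃ b ∈ s, f a = f b
    · obtain ⟨b, hb, hab⟩ := hdup
      exact ⟨a, Multiset.mem_cons_self a s, b, by rwa [Multiset.erase_cons_head], hab⟩
    push Not at hdup
    have hfa : f a ∈ t := hf a (Multiset.mem_cons_self a s)
    have hmaps : ∀ b ∈ s, f b ∈ t.erase (f a) := fun b hb =>
      Finset.mem_erase.2 ⟨(hdup b hb).symm, hf b (Multiset.mem_cons_of_mem hb)⟩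
    have hlt : (t.erase (f a)).card < Multiset.card s := by
      rw [Multiset.card_cons] at hcard
      rw [Finset.card_erase_of_mem hfa]
      have := Finset.card_pos.2 ⟨_, hfa⟩
      omega
    obtain ⟨b, hb, c, hc, hbc⟩ := ih hmaps hlt
    exact ⟨b, Multiset.mem_cons_of_mem hb, c,
      Multiset.mem_of_le (Multiset.erase_le_erase b (Multiset.le_cons_self s a)) hc, hbc⟩

theorem abs_sub_lt_of_ceil_div_eq {a b c : ℝ} (hc : 0 < c) (h : ⌈a / c⌉ = ⌈b / c⌉) :
    |a - b| < c := by
  have ha := Int.ceil_lt_add_one (a / c)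
  have ha' := Int.le_ceil (a / c)
  have hb := Int.ceil_lt_add_one (b / c)
  have hb' := Int.le_ceil (b / c)
  rw [h] at ha ha'
  have hdiv : |a / c - b / c| < 1 := abs_sub_lt_iff.2 ⟨by linarith, by linarith⟩
  rwa [← sub_div, abs_div, abs_of_pos hc, div_lt_one hc] at hdiv

section InnerProductSpace

variable {V : Type*} [NormedAddCommGroup V] [InnerProductSpace ℝ V]

theorem half_norm_mul_norm_le_inner_of_angle_le {u v : V} (h : angle u v ≤ π / 3) :
    ‖u‖ * ‖v‖ / 2 ≤ ⟪u, v⟫ := by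
  have hcos : 1 / 2 ≤ cos (angle u v) := by
    rw [← cos_pi_div_three]
    exact cos_le_cos_of_nonneg_of_le_pi (angle_nonneg u v) (by linarith [pi_pos]) h
  rw [← cos_angle_mul_norm_mul_norm]
  nlinarith [mul_nonneg (norm_nonneg u) (norm_nonneg v)]

theorem norm_sub_le_max_of_half_norm_mul_norm_le_inner {u v : V}
    (h : ‖u‖ * ‖v‖ / 2 ≤ ⟪u, v⟫) : ‖u - v‖ ≤ max ‖u‖ ‖v‖ := by
  rw [← pow_le_pow_iff_left₀ (norm_nonneg _) (le_max_of_le_left (norm_nonneg _)) two_ne_zero,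
    norm_sub_sq_real]
  rcases le_total ‖u‖ ‖v‖ with huv | hvu
  · rw [max_eq_right huv]; nlinarith [norm_nonneg u]
  · rw [max_eq_left hvu]; nlinarith [norm_nonneg v]

end InnerProductSpace

namespace Complex

theorem angle_eq_abs_arg_sub_arg {x y : ℂ} (hx : x ≠ 0) (hy : y ≠ 0)
    (h : |x.arg - y.arg| < π) : angle x y = |x.arg - y.arg| := by
  rw [angle_eq_abs_arg hx hy, ← arg_coe_angle_toReal_eq_arg, arg_div_coe_angle hx hy,
    ← Real.Angle.coe_sub, Real.Angle.toReal_coe_eq_self_iff.2 ⟨(abs_lt.1 h).1, (abs_lt.1 h).2.le⟩]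

theorem sixthSector_mem_Icc (z : ℂ) : sixthSector z ∈ Finset.Icc (-2) 3 := by
  have h3 : (0 : ℝ) < π / 3 := by positivity
  obtain ⟨hlo, hhi⟩ := arg_mem_Ioc z
  rw [Finset.mem_Icc, sixthSector, ← Int.sub_one_lt_iff, Int.lt_ceil, Int.ceil_le]
  constructor
  · rw [lt_div_iff₀ h3]; push_cast; linarith
  · rw [div_le_iff₀ h3]; push_cast; linarith

theorem half_norm_mul_norm_le_inner_of_sixthSector_eq {z w : ℂ}
    (h : sixthSector z = sixthSector w) : ‖z‖ * ‖w‖ / 2 ≤ ⟪z, w⟫ := by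
  rcases eq_or_ne z 0 with rfl | hz
  · simp
  rcases eq_or_ne w 0 with rfl | hw
  · simp
  have harg : |z.arg - w.arg| < π / 3 := abs_sub_lt_of_ceil_div_eq (by positivity) h
  apply half_norm_mul_norm_le_inner_of_angle_le
  rw [angle_eq_abs_arg_sub_arg hz hw (by linarith [pi_pos])]
  exact harg.le

end Complex

theorem stmt18 (S : Multiset (EuclideanSpace ℝ (Fin 2))) (ε : ℝ)
    (hcard : 7 ≤ Multiset.card S) (hS : ∀ x ∈ S, ‖x‖ < ε) :
    ∃ u ∈ S, ∃ v ∈ S.erase u, ⟪u, v⟫ ≥ ‖u‖ * ‖v‖ / 2 ∧ ‖u - v‖ < ε := by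
  let e := Complex.orthonormalBasisOneI.repr.symm
  obtain ⟨u, hu, v, hv, hsector⟩ :=
    S.exists_mem_mem_erase_map_eq_of_card_lt (Complex.sixthSector ∘ e)
      (fun x _ => Complex.sixthSector_mem_Icc (e x)) (by rw [Int.card_Icc]; omega)
  have hinner : ‖u‖ * ‖v‖ / 2 ≤ ⟪u, v⟫ := by
    simpa only [e.norm_map, e.inner_map_map] using
      Complex.half_norm_mul_norm_le_inner_of_sixthSector_eq hsector
  exact ⟨u, hu, v, hv, hinner, (norm_sub_le_max_of_half_norm_mul_norm_le_inner hinner).trans_lt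
    (max_lt (hS u hu) (hS v (Multiset.mem_of_mem_erase hv)))⟩
end
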